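/- arXiv:1908.06000 — 4 statements merged into one kernel-verified Lean document; each statement's English description precedes it below -/
import Mathlib

section
/- For every integer n ≥ 2 and every c₀ ∈ (0,1) there exist constants C > 0 and δ₀ ∈ (0, 1/100), depending only on n and c₀, such that for every δ ∈ (0, δ₀) and every integer N with 1 ≤ N ≤ δ^{2−2n}, there exists a finite essentially distinct family of δ-tubes in ℝⁿ of cardinality at least N whose union has Lebesgue measure at most C · √N · δ^{n−1}. -/
/-!
Take `e₀ = (1, 0, …, 0)` and `P = N ^ (1 / (2 (n - 1)))`. The directions are `e₀` tilted by the
points of a grid of mesh `8 δ / c₀` in `e₀ᗮ`, the centres are the points of a grid of mesh `3 δ`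
in `e₀ᗮ`, both grids of side `O(P δ)`, with `≥ P ^ (2 (n - 1)) = N` pairs in all. Every tube lies
in a box `[-1, 1] × [-O(P δ), O(P δ)] ^ (n - 1)` of volume `O(√N δ ^ (n - 1))`.

Tubes with equal directions are disjoint. Tubes whose directions make an angle `θ` meet inside a
piece of axial length `4 δ / sin θ ≤ c₀` of either tube. The axial coordinate pushes Lebesgue
measure on the infinite cylinder forward to a translation-invariant measure on `ℝ`, hence to a
multiple of Lebesgue measure, so such a piece has at most a fraction `c₀` of the tube's volume.
-/

open MeasureTheory

noncomputable section

/-- The `δ`-tube in `ℝⁿ` with center `a` and direction `e`. -/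
def euclTube (n : ℕ) (δ : ℝ) (a e : EuclideanSpace ℝ (Fin n)) :
    Set (EuclideanSpace ℝ (Fin n)) :=
  {x | |(inner ℝ (x - a) e : ℝ)| ≤ 1 / 2 ∧
       ‖(x - a) - (inner ℝ (x - a) e : ℝ) • e‖ ≤ δ / 2}

/-- An indexed family of `δ`-tubes (given by centers `a i` and directions `e i`) is
essentially distinct with parameter `c₀`. -/
def EssentiallyDistinct (n : ℕ) (δ c₀ : ℝ) {ι : Type*}
    (a e : ι → EuclideanSpace ℝ (Fin n)) : Prop :=
  ∀ i j, i ≠ j →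
    volume (euclTube n δ (a i) (e i) ∩ euclTube n δ (a j) (e j)) ≤
      ENNReal.ofReal c₀ * volume (euclTube n δ (a i) (e i))

open Set
open scoped RealInnerProductSpace

section Projection

variable {E : Type*} [NormedAddCommGroup E] [InnerProductSpace ℝ E] {e e' : E}

lemma norm_sub_inner_smul_sq (he : ‖e‖ = 1) (w : E) :
    ‖w - ⟪w, e⟫ • e‖ ^ 2 = ‖w‖ ^ 2 - ⟪w, e⟫ ^ 2 := by
  rw [norm_sub_sq_real, norm_smul, real_inner_smul_right, he, Real.norm_eq_abs, mul_one, sq_abs]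
  ring

lemma norm_sub_inner_smul_le (he : ‖e‖ = 1) (w : E) : ‖w - ⟪w, e⟫ • e‖ ≤ ‖w‖ :=
  (pow_le_pow_iff_left₀ (norm_nonneg _) (norm_nonneg _) two_ne_zero).1 <| by
    rw [norm_sub_inner_smul_sq he]; nlinarith [sq_nonneg ⟪w, e⟫]

lemma sub_inner_smul_sub_sub_inner_smul (e v w : E) :
    (v - ⟪v, e⟫ • e) - (w - ⟪w, e⟫ • e) = (v - w) - ⟪v - w, e⟫ • e := by
  rw [inner_sub_left, sub_smul]; abel

/-- Project `w = ⟪w, e⟫ • e + p` orthogonally to `e'`: the first summand then has length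
`|⟪w, e⟫| sin ∠(e, e')`. -/
lemma abs_inner_mul_sqrt_le (he : ‖e‖ = 1) (he' : ‖e'‖ = 1) (w : E) :
    |⟪w, e⟫| * √(1 - ⟪e, e'⟫ ^ 2) ≤ ‖w - ⟪w, e⟫ • e‖ + ‖w - ⟪w, e'⟫ • e'‖ := by
  set p := w - ⟪w, e⟫ • e
  have hsplit : ⟪w, e⟫ • (e - ⟪e, e'⟫ • e') = (w - ⟪w, e'⟫ • e') - (p - ⟪p, e'⟫ • e') := by
    simp only [p, inner_sub_left, real_inner_smul_left]; module
  have hnorm : ‖e - ⟪e, e'⟫ • e'‖ = √(1 - ⟪e, e'⟫ ^ 2) := by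
    rw [← one_pow 2, ← he, ← norm_sub_inner_smul_sq he' e, Real.sqrt_sq (norm_nonneg _)]
  calc |⟪w, e⟫| * √(1 - ⟪e, e'⟫ ^ 2) = ‖⟪w, e⟫ • (e - ⟪e, e'⟫ • e')‖ := by
        rw [norm_smul, hnorm, Real.norm_eq_abs]
    _ ≤ ‖w - ⟪w, e'⟫ • e'‖ + ‖p - ⟪p, e'⟫ • e'‖ := hsplit ▸ norm_sub_le _ _
    _ ≤ ‖w - ⟪w, e'⟫ • e'‖ + ‖p‖ := by gcongr; exact norm_sub_inner_smul_le he' p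
    _ = ‖p‖ + ‖w - ⟪w, e'⟫ • e'‖ := add_comm _ _

end Projection

section TiltedDirection

variable {E : Type*} [NormedAddCommGroup E] [InnerProductSpace ℝ E] {e₀ u u' A : E}

/-- The unit vector whose component orthogonal to the unit vector `e₀` is `u`. -/
def tiltDir (e₀ u : E) : E := √(1 - ‖u‖ ^ 2) • e₀ + u

lemma norm_tiltDir (he₀ : ‖e₀‖ = 1) (hu : ⟪u, e₀⟫ = 0) (hu₁ : ‖u‖ ≤ 1) :
    ‖tiltDir e₀ u‖ = 1 := by
  have h : 0 ≤ 1 - ‖u‖ ^ 2 := by nlinarith [norm_nonneg u]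
  have : ‖tiltDir e₀ u‖ ^ 2 = 1 := by
    rw [tiltDir, norm_add_sq_real, norm_smul, real_inner_smul_left, real_inner_comm, hu, he₀,
      Real.norm_eq_abs, abs_of_nonneg (Real.sqrt_nonneg _), mul_one, Real.sq_sqrt h]
    ring
  exact (pow_eq_one_iff_of_nonneg (norm_nonneg _) two_ne_zero).1 this

lemma inner_tiltDir_of_inner_eq_zero (hA : ⟪A, e₀⟫ = 0) : ⟪A, tiltDir e₀ u⟫ = ⟪A, u⟫ := by
  rw [tiltDir, inner_add_right, real_inner_smul_right, hA, mul_zero, zero_add]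

lemma norm_sub_div_two_le_sqrt_one_sub_inner_tiltDir_sq (he₀ : ‖e₀‖ = 1) (hu : ⟪u, e₀⟫ = 0)
    (hu' : ⟪u', e₀⟫ = 0) (hu₁ : ‖u‖ ≤ 1 / 2) (hu₁' : ‖u'‖ ≤ 1 / 2) :
    ‖u - u'‖ / 2 ≤ √(1 - ⟪tiltDir e₀ u, tiltDir e₀ u'⟫ ^ 2) := by
  set d := ⟪tiltDir e₀ u, tiltDir e₀ u'⟫
  have he : ‖tiltDir e₀ u‖ = 1 := norm_tiltDir he₀ hu (by linarith)
  have he' : ‖tiltDir e₀ u'‖ = 1 := norm_tiltDir he₀ hu' (by linarith)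
  have hd_le : d ≤ 1 := (real_inner_le_norm _ _).trans (by rw [he, he', one_mul])
  have hd_ge : -1 / 4 ≤ d := by
    have hd : d = √(1 - ‖u‖ ^ 2) * √(1 - ‖u'‖ ^ 2) + ⟪u, u'⟫ := by
      simp only [d, tiltDir, inner_add_left, inner_add_right, real_inner_smul_left,
        real_inner_smul_right, real_inner_self_eq_norm_sq, he₀, real_inner_comm u' e₀, hu, hu']
      ring
    have : -(1 / 4) ≤ ⟪u, u'⟫ := by
      nlinarith [neg_abs_le ⟪u, u'⟫, abs_real_inner_le_norm u u', norm_nonneg u, norm_nonneg u']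
    rw [hd]; nlinarith [Real.sqrt_nonneg (1 - ‖u‖ ^ 2), Real.sqrt_nonneg (1 - ‖u'‖ ^ 2)]
  -- `u - u'` is the component of `tiltDir e₀ u - tiltDir e₀ u'` orthogonal to `e₀`
  have hsep : ‖u - u'‖ ^ 2 ≤ 2 - 2 * d := by
    have hsub : tiltDir e₀ u - tiltDir e₀ u' =
        (√(1 - ‖u‖ ^ 2) - √(1 - ‖u'‖ ^ 2)) • e₀ + (u - u') := by
      simp only [tiltDir, sub_smul]; abel
    have hinner : ⟪(√(1 - ‖u‖ ^ 2) - √(1 - ‖u'‖ ^ 2)) • e₀, u - u'⟫ = 0 := by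
      rw [real_inner_smul_left, inner_sub_right, real_inner_comm u e₀, real_inner_comm u' e₀,
        hu, hu', sub_zero, mul_zero]
    have := norm_add_sq_real ((√(1 - ‖u‖ ^ 2) - √(1 - ‖u'‖ ^ 2)) • e₀) (u - u')
    rw [← hsub, hinner, norm_sub_sq_real, he, he'] at this
    nlinarith [sq_nonneg ‖(√(1 - ‖u‖ ^ 2) - √(1 - ‖u'‖ ^ 2)) • e₀‖]
  exact Real.le_sqrt_of_sq_le (by nlinarith)

lemma norm_le_two_mul_norm_sub_inner_tiltDir (he₀ : ‖e₀‖ = 1) (hu : ⟪u, e₀⟫ = 0)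
    (hu₁ : ‖u‖ ≤ 1 / 2) (hA : ⟪A, e₀⟫ = 0) :
    ‖A‖ ≤ 2 * ‖A - ⟪A, tiltDir e₀ u⟫ • tiltDir e₀ u‖ := by
  rw [inner_tiltDir_of_inner_eq_zero hA]
  have h := norm_sub_norm_le A (⟪A, u⟫ • tiltDir e₀ u)
  rw [norm_smul, norm_tiltDir he₀ hu (by linarith), mul_one, Real.norm_eq_abs] at h
  nlinarith [abs_real_inner_le_norm A u, norm_nonneg A]

end TiltedDirection

section Tubes

variable {n : ℕ} {δ : ℝ} {a b e e' : EuclideanSpace ℝ (Fin n)}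

def axialMeasure (n : ℕ) (δ : ℝ) (a e : EuclideanSpace ℝ (Fin n)) : Measure ℝ :=
  (volume.restrict {x | ‖(x - a) - ⟪x - a, e⟫ • e‖ ≤ δ / 2}).map fun x => ⟪x - a, e⟫

lemma axialMeasure_apply {s : Set ℝ} (hs : MeasurableSet s) :
    axialMeasure n δ a e s =
      volume {x | ⟪x - a, e⟫ ∈ s ∧ ‖(x - a) - ⟪x - a, e⟫ • e‖ ≤ δ / 2} := by
  have hφ : Measurable fun x : EuclideanSpace ℝ (Fin n) => ⟪x - a, e⟫ := by fun_prop
  rw [axialMeasure, Measure.map_apply hφ hs, Measure.restrict_apply (hφ hs)]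
  rfl

lemma volume_euclTube_eq_axialMeasure :
    volume (euclTube n δ a e) = axialMeasure n δ a e (Icc (-(1 / 2)) (1 / 2)) := by
  rw [axialMeasure_apply measurableSet_Icc]
  simp only [euclTube, mem_Icc, abs_le]

lemma isAddLeftInvariant_axialMeasure (he : ‖e‖ = 1) :
    (axialMeasure n δ a e).IsAddLeftInvariant := by
  refine ⟨fun r => Measure.ext fun s hs => ?_⟩
  have hshift : ∀ x : EuclideanSpace ℝ (Fin n), ⟪x + r • e - a, e⟫ = r + ⟪x - a, e⟫ := by
    intro x
    rw [add_sub_right_comm, inner_add_left, real_inner_smul_left, real_inner_self_eq_norm_sq,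
      he]
    ring
  rw [Measure.map_apply (measurable_const_add r) hs, axialMeasure_apply (measurable_const_add r hs),
    axialMeasure_apply hs]
  conv_rhs => rw [← measure_preimage_add_right volume (r • e)]
  congr 1
  ext x
  simp only [mem_ofPred_eq, mem_preimage, hshift, add_smul]
  rw [show x + r • e - a - (r • e + ⟪x - a, e⟫ • e) = x - a - ⟪x - a, e⟫ • e by abel]

lemma isFiniteMeasureOnCompacts_axialMeasure :
    IsFiniteMeasureOnCompacts (axialMeasure n δ a e) := by
  refine ⟨fun K hK => ?_⟩
  obtain ⟨R, hR⟩ := hK.isBounded.subset_closedBall 0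
  rw [Real.closedBall_eq_Icc] at hR
  refine (measure_mono hR).trans_lt ?_
  rw [axialMeasure_apply measurableSet_Icc]
  refine (Metric.isBounded_closedBall (x := a) (r := R * ‖e‖ + δ / 2)).subset ?_
    |>.measure_lt_top
  rintro x ⟨ht, hp⟩
  rw [Metric.mem_closedBall, dist_eq_norm]
  have ht' : |⟪x - a, e⟫| ≤ R := by
    rw [abs_le]; simp only [mem_Icc, zero_sub, zero_add] at ht; exact ht
  calc ‖x - a‖ = ‖⟪x - a, e⟫ • e + ((x - a) - ⟪x - a, e⟫ • e)‖ := by rw [add_sub_cancel]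
    _ ≤ |⟪x - a, e⟫| * ‖e‖ + δ / 2 := by
        grw [norm_add_le, norm_smul, Real.norm_eq_abs, hp]
    _ ≤ R * ‖e‖ + δ / 2 := by gcongr

/-- Uniqueness of Haar measure on `ℝ`. -/
lemma axialMeasure_eq_smul_volume (he : ‖e‖ = 1) :
    axialMeasure n δ a e = volume (euclTube n δ a e) • volume := by
  have := isAddLeftInvariant_axialMeasure (n := n) (δ := δ) (a := a) he
  have := isFiniteMeasureOnCompacts_axialMeasure (n := n) (δ := δ) (a := a) (e := e)
  have hμ := Measure.isAddLeftInvariant_eq_smul (axialMeasure n δ a e) volume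
  have hIcc : volume (Icc (-(1 / 2) : ℝ) (1 / 2)) = 1 := by norm_num [Real.volume_Icc]
  conv_rhs => rw [volume_euclTube_eq_axialMeasure, hμ, Measure.smul_apply, hIcc, smul_one_smul]
  exact hμ

lemma norm_sub_inner_smul_sub_le {x y : EuclideanSpace ℝ (Fin n)} (hx : x ∈ euclTube n δ a e)
    (hy : y ∈ euclTube n δ b e) :
    ‖((x - a) - (y - b)) - ⟪(x - a) - (y - b), e⟫ • e‖ ≤ δ := by
  rw [← sub_inner_smul_sub_sub_inner_smul]
  linarith [norm_sub_le ((x - a) - ⟪x - a, e⟫ • e) ((y - b) - ⟪y - b, e⟫ • e), hx.2, hy.2]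

lemma abs_inner_sub_mul_sqrt_le (he : ‖e‖ = 1) (he' : ‖e'‖ = 1)
    {x y : EuclideanSpace ℝ (Fin n)} (hx : x ∈ euclTube n δ a e ∩ euclTube n δ b e')
    (hy : y ∈ euclTube n δ a e ∩ euclTube n δ b e') :
    |⟪x - a, e⟫ - ⟪y - a, e⟫| * √(1 - ⟪e, e'⟫ ^ 2) ≤ 2 * δ := by
  have hxy := norm_sub_inner_smul_sub_le hx.1 hy.1
  have hxy' := norm_sub_inner_smul_sub_le hx.2 hy.2
  rw [sub_sub_sub_cancel_right] at hxy hxy'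
  rw [← inner_sub_left, sub_sub_sub_cancel_right]
  linarith [abs_inner_mul_sqrt_le he he' (x - y)]

/-- The intersection lies in a piece of `euclTube n δ a e` of axial length `4 δ / sin ∠(e, e')`,
and by `axialMeasure_eq_smul_volume` the volume of such a piece is proportional to its length. -/
theorem volume_euclTube_inter_le {c : ℝ} (hδ : 0 < δ) (he : ‖e‖ = 1) (he' : ‖e'‖ = 1)
    (hc : 4 * δ ≤ c * √(1 - ⟪e, e'⟫ ^ 2)) :
    volume (euclTube n δ a e ∩ euclTube n δ b e') ≤
      ENNReal.ofReal c * volume (euclTube n δ a e) := by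
  obtain h | ⟨y, hy⟩ := (euclTube n δ a e ∩ euclTube n δ b e').eq_empty_or_nonempty
  · simp [h]
  set s := √(1 - ⟪e, e'⟫ ^ 2)
  have hs : 0 < s := by
    by_contra! h
    rw [le_antisymm h (Real.sqrt_nonneg _), mul_zero] at hc
    linarith
  set r := ⟪y - a, e⟫
  have hsub : euclTube n δ a e ∩ euclTube n δ b e' ⊆
      {x | ⟪x - a, e⟫ ∈ Icc (r - 2 * δ / s) (r + 2 * δ / s) ∧
        ‖(x - a) - ⟪x - a, e⟫ • e‖ ≤ δ / 2} := by
    intro x hx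
    have h := abs_inner_sub_mul_sqrt_le he he' hx hy
    rw [← le_div_iff₀ hs, abs_le] at h
    exact ⟨⟨by linarith, by linarith⟩, hx.1.2⟩
  calc volume (euclTube n δ a e ∩ euclTube n δ b e')
      ≤ axialMeasure n δ a e (Icc (r - 2 * δ / s) (r + 2 * δ / s)) := by
        rw [axialMeasure_apply measurableSet_Icc]; exact measure_mono hsub
    _ = ENNReal.ofReal (4 * δ / s) * volume (euclTube n δ a e) := by
        rw [axialMeasure_eq_smul_volume he, Measure.smul_apply, Real.volume_Icc, smul_eq_mul,
          mul_comm]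
        congr 2; ring
    _ ≤ ENNReal.ofReal c * volume (euclTube n δ a e) := by
        gcongr
        rwa [div_le_iff₀ hs]

lemma disjoint_euclTube_of_lt (hab : δ < ‖(a - b) - ⟪a - b, e⟫ • e‖) :
    Disjoint (euclTube n δ a e) (euclTube n δ b e) := by
  refine Set.disjoint_left.2 fun x hxa hxb => hab.not_ge ?_
  simpa using norm_sub_inner_smul_sub_le hxb hxa

end Tubes

lemma EssentiallyDistinct.comp {n : ℕ} {δ c₀ : ℝ} {ι ι' : Type*}
    {a e : ι → EuclideanSpace ℝ (Fin n)} (h : EssentiallyDistinct n δ c₀ a e) {σ : ι' → ι}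
    (hσ : Function.Injective σ) : EssentiallyDistinct n δ c₀ (a ∘ σ) (e ∘ σ) :=
  fun i j hij => h (σ i) (σ j) (hσ.ne hij)

/-- Tubes with equal directions are disjoint; the others cross at an angle whose sine is at least
`4 δ / c₀`. -/
theorem essentiallyDistinct_tiltDir {n : ℕ} {ι κ : Type*} {e₀ : EuclideanSpace ℝ (Fin n)}
    (he₀ : ‖e₀‖ = 1) {δ c₀ : ℝ} (hδ : 0 < δ) (hc₀ : 0 ≤ c₀)
    {u : ι → EuclideanSpace ℝ (Fin n)} (hu₀ : ∀ i, ⟪u i, e₀⟫ = 0) (hu : ∀ i, ‖u i‖ ≤ 1 / 2)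
    (hu_sep : Pairwise fun i j => 8 * δ ≤ c₀ * ‖u i - u j‖)
    {b : κ → EuclideanSpace ℝ (Fin n)} (hb₀ : ∀ j, ⟪b j, e₀⟫ = 0)
    (hb_sep : Pairwise fun i j => 3 * δ ≤ ‖b i - b j‖) :
    EssentiallyDistinct n δ c₀ (fun p : ι × κ => b p.2) (fun p => tiltDir e₀ (u p.1)) := by
  rintro ⟨i, k⟩ ⟨j, l⟩ hne
  obtain rfl | hij := eq_or_ne i j
  · have hkl : k ≠ l := fun h => hne (by rw [h])
    have hperp := norm_le_two_mul_norm_sub_inner_tiltDir he₀ (hu₀ i) (hu i)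
      (by rw [inner_sub_left, hb₀, hb₀, sub_zero] : ⟪b k - b l, e₀⟫ = 0)
    have hdisj := disjoint_euclTube_of_lt (n := n) (δ := δ) (e := tiltDir e₀ (u i))
      (by linarith [hb_sep hkl] : δ < _)
    simp [hdisj.inter_eq]
  · refine volume_euclTube_inter_le hδ (norm_tiltDir he₀ (hu₀ i) (by linarith [hu i]))
      (norm_tiltDir he₀ (hu₀ j) (by linarith [hu j])) ?_
    have hangle := norm_sub_div_two_le_sqrt_one_sub_inner_tiltDir_sq he₀ (hu₀ i) (hu₀ j) (hu i)
      (hu j)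
    nlinarith [hu_sep hij]

lemma EuclideanSpace.norm_le_sqrt_card_mul {ι : Type*} [Fintype ι] (x : EuclideanSpace ℝ ι)
    {B : ℝ} (hx : ∀ i, |x i| ≤ B) : ‖x‖ ≤ √(Fintype.card ι) * B := by
  rcases isEmpty_or_nonempty ι with hι | hι
  · simp [Subsingleton.elim x 0]
  have hB : 0 ≤ B := (abs_nonneg _).trans (hx (Classical.arbitrary _))
  rw [EuclideanSpace.norm_eq, ← Real.sqrt_sq hB, ← Real.sqrt_mul (Nat.cast_nonneg _)]
  gcongr
  calc ∑ i, ‖x i‖ ^ 2 ≤ ∑ _i : ι, B ^ 2 := by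
        gcongr with i; rw [Real.norm_eq_abs]; exact hx i
    _ = _ := by simp

lemma volume_setOf_forall_abs_le {ι : Type*} [Fintype ι] (h : ι → ℝ) :
    volume {x : EuclideanSpace ℝ ι | ∀ i, |x i| ≤ h i} = ∏ i, ENNReal.ofReal (2 * h i) := by
  have hset : {x : EuclideanSpace ℝ ι | ∀ i, |x i| ≤ h i} =
      WithLp.ofLp ⁻¹' Icc (-h) h := by
    ext x
    simp [abs_le, Pi.le_def, forall_and]
  rw [hset, (PiLp.volume_preserving_ofLp ι).measure_preimage measurableSet_Icc.nullMeasurableSet,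
    Real.volume_Icc_pi]
  congr! 2 with i
  simp only [Pi.neg_apply]; ring

section Grid

variable {m K : ℕ} {c : ℝ}

def gridPoint (c : ℝ) (v : Fin m → Fin K) : EuclideanSpace ℝ (Fin (m + 1)) :=
  WithLp.toLp 2 (Fin.cons 0 fun k => c * v k)

@[simp]
lemma gridPoint_apply_zero (v : Fin m → Fin K) : gridPoint c v 0 = 0 := rfl

@[simp]
lemma gridPoint_apply_succ (v : Fin m → Fin K) (k : Fin m) : gridPoint c v k.succ = c * v k := rfl

lemma inner_gridPoint_single_zero (v : Fin m → Fin K) :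
    ⟪gridPoint c v, EuclideanSpace.single 0 1⟫ = 0 := by
  simp [EuclideanSpace.inner_single_right]

lemma abs_gridPoint_apply_le (hc : 0 ≤ c) (v : Fin m → Fin K) (k : Fin (m + 1)) :
    |gridPoint c v k| ≤ c * K := by
  cases k using Fin.cases with
  | zero => simp; positivity
  | succ k =>
    rw [gridPoint_apply_succ, abs_of_nonneg (by positivity)]
    gcongr
    exact_mod_cast (v k).isLt.le

lemma le_norm_gridPoint_sub (hc : 0 ≤ c) {v v' : Fin m → Fin K} (h : v ≠ v') :
    c ≤ ‖gridPoint c v - gridPoint c v'‖ := by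
  obtain ⟨k, hk⟩ := Function.ne_iff.1 h
  have hk' : (1 : ℝ) ≤ |(v k : ℝ) - v' k| := by
    have : (1 : ℤ) ≤ |(v k : ℤ) - v' k| :=
      Int.one_le_abs (sub_ne_zero.2 (by exact_mod_cast Fin.val_ne_of_ne hk))
    exact_mod_cast this
  calc c ≤ c * |(v k : ℝ) - v' k| := le_mul_of_one_le_right hc hk'
    _ = ‖(gridPoint c v - gridPoint c v') k.succ‖ := by
        rw [PiLp.sub_apply, gridPoint_apply_succ, gridPoint_apply_succ, ← mul_sub,
          Real.norm_eq_abs, abs_mul, abs_of_nonneg hc]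
    _ ≤ ‖gridPoint c v - gridPoint c v'‖ := PiLp.norm_apply_le _ _

end Grid

lemma abs_apply_sub_le_of_mem_euclTube {n : ℕ} {δ : ℝ} {a e x : EuclideanSpace ℝ (Fin n)}
    (hx : x ∈ euclTube n δ a e) (k : Fin n) : |x k - a k| ≤ |e k| / 2 + δ / 2 := by
  have hk : x k - a k = ⟪x - a, e⟫ * e k + ((x - a) - ⟪x - a, e⟫ • e) k := by
    simp only [PiLp.sub_apply, PiLp.smul_apply, smul_eq_mul]; ring
  have hp := (PiLp.norm_apply_le ((x - a) - ⟪x - a, e⟫ • e) k).trans hx.2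
  rw [hk, Real.norm_eq_abs] at *
  calc _ ≤ |⟪x - a, e⟫| * |e k| + |((x - a) - ⟪x - a, e⟫ • e) k| := by
        grw [abs_add_le, abs_mul]
    _ ≤ 1 / 2 * |e k| + δ / 2 := by gcongr; exact hx.1
    _ = |e k| / 2 + δ / 2 := by ring

/-- The tubes lie in the box `[-1, 1] × [-W, W]ᵐ`. -/
lemma volume_iUnion_euclTube_le {m : ℕ} {ι : Type*} {δ W : ℝ} (hδ : δ ≤ 1)
    {a e : ι → EuclideanSpace ℝ (Fin (m + 1))} (ha : ∀ i, a i 0 = 0) (he : ∀ i, ‖e i‖ = 1)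
    (hW : ∀ i (k : Fin m), |a i k.succ| + |e i k.succ| / 2 + δ / 2 ≤ W) :
    volume (⋃ i, euclTube (m + 1) δ (a i) (e i)) ≤ 2 * ENNReal.ofReal (2 * W) ^ m := by
  set h : Fin (m + 1) → ℝ := Fin.cons 1 fun _ => W
  calc volume (⋃ i, euclTube (m + 1) δ (a i) (e i))
      ≤ volume {x : EuclideanSpace ℝ (Fin (m + 1)) | ∀ k, |x k| ≤ h k} := by
        refine measure_mono (iUnion_subset fun i x hx k => ?_)
        have hxk := abs_apply_sub_le_of_mem_euclTube hx k
        cases k using Fin.cases with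
        | zero =>
          have := (PiLp.norm_apply_le (e i) 0).trans (he i).le
          rw [ha, sub_zero, Real.norm_eq_abs] at *
          simp only [h, Fin.cons_zero]; linarith
        | succ k =>
          simp only [h, Fin.cons_succ]
          linarith [abs_sub_abs_le_abs_sub (x k.succ) (a i k.succ), hW i k]
    _ = 2 * ENNReal.ofReal (2 * W) ^ m := by
        rw [volume_setOf_forall_abs_le, Fin.prod_univ_succ]
        simp [h]

/-- The family of tubes through the points `gridPoint (3 δ) w` in the directions
`tiltDir e₀ (gridPoint (8 δ / c₀) v)`, where `e₀` is the first basis vector. -/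
theorem exists_essentiallyDistinct_family (m K₁ K₂ : ℕ) {δ c₀ : ℝ} (hδ : 0 < δ) (hδ₁ : δ ≤ 1)
    (hc₀ : 0 < c₀) (hK₁ : (m + 1) * (8 * δ / c₀ * K₁) ≤ 1 / 2) :
    ∃ (M : ℕ) (a e : Fin M → EuclideanSpace ℝ (Fin (m + 1))),
      M = (K₁ * K₂) ^ m ∧ (∀ i, ‖e i‖ = 1) ∧ EssentiallyDistinct (m + 1) δ c₀ a e ∧
      volume (⋃ i, euclTube (m + 1) δ (a i) (e i)) ≤
        2 * ENNReal.ofReal (2 * (3 * δ * K₂ + 4 * δ / c₀ * K₁ + δ / 2)) ^ m := by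
  set e₀ : EuclideanSpace ℝ (Fin (m + 1)) := EuclideanSpace.single 0 1
  have he₀ : ‖e₀‖ = 1 := by simp [e₀]
  set u : (Fin m → Fin K₁) → EuclideanSpace ℝ (Fin (m + 1)) := gridPoint (8 * δ / c₀)
  set b : (Fin m → Fin K₂) → EuclideanSpace ℝ (Fin (m + 1)) := gridPoint (3 * δ)
  have hu : ∀ v, ‖u v‖ ≤ 1 / 2 := fun v => by
    have hm : √((m : ℝ) + 1) ≤ m + 1 := Real.sqrt_le_self_iff.2 (.inr (by linarith))
    calc ‖u v‖ ≤ √(Fintype.card (Fin (m + 1))) * (8 * δ / c₀ * K₁) :=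
          EuclideanSpace.norm_le_sqrt_card_mul _ (abs_gridPoint_apply_le (by positivity) v)
      _ ≤ (m + 1) * (8 * δ / c₀ * K₁) := by simp only [Fintype.card_fin]; push_cast; gcongr
      _ ≤ 1 / 2 := hK₁
  have he : ∀ v, ‖tiltDir e₀ (u v)‖ = 1 := fun v =>
    norm_tiltDir he₀ (inner_gridPoint_single_zero v) (by linarith [hu v])
  have hED : EssentiallyDistinct (m + 1) δ c₀ (fun p : _ × _ => b p.2)
      (fun p => tiltDir e₀ (u p.1)) :=
    essentiallyDistinct_tiltDir he₀ hδ hc₀.le inner_gridPoint_single_zero hu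
      (fun v v' h => (div_le_iff₀' hc₀).1 (le_norm_gridPoint_sub (by positivity) h))
      inner_gridPoint_single_zero (fun w w' h => le_norm_gridPoint_sub (by positivity) h)
  set σ := (Fintype.equivFin ((Fin m → Fin K₁) × (Fin m → Fin K₂))).symm
  refine ⟨_, _, _, by simp [mul_pow], fun i => he (σ i).1, hED.comp σ.injective,
    volume_iUnion_euclTube_le hδ₁ (fun i => gridPoint_apply_zero _) (fun i => he (σ i).1)
      fun i k => ?_⟩
  have htilt : tiltDir e₀ (u (σ i).1) k.succ = u (σ i).1 k.succ := by
    simp [tiltDir, e₀, Fin.succ_ne_zero]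
  have hb : |b (σ i).2 k.succ| ≤ 3 * δ * K₂ := abs_gridPoint_apply_le (by positivity) _ _
  have hu' : |u (σ i).1 k.succ| ≤ 8 * δ / c₀ * K₁ := abs_gridPoint_apply_le (by positivity) _ _
  simp only [Function.comp_apply, htilt]
  linarith [show 8 * δ / c₀ * K₁ / 2 = 4 * δ / c₀ * K₁ by ring]

lemma exists_one_le_pow_eq_sqrt {m N : ℕ} (hm : m ≠ 0) (hN : 1 ≤ N) {δ : ℝ} (hδ : 0 < δ)
    (hNδ : (N : ℝ) ≤ (δ ^ (2 * m))⁻¹) : ∃ P : ℝ, 1 ≤ P ∧ P * δ ≤ 1 ∧ P ^ m = √N := by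
  have hP : (√N ^ (m⁻¹ : ℝ)) ^ m = √N := Real.rpow_inv_natCast_pow (Real.sqrt_nonneg _) hm
  refine ⟨√N ^ (m⁻¹ : ℝ),
    Real.one_le_rpow (Real.one_le_sqrt.2 (by exact_mod_cast hN)) (by positivity), ?_, hP⟩
  refine (pow_le_one_iff_of_nonneg (by positivity) hm).1 ?_
  have hsqrt : √N ≤ (δ ^ m)⁻¹ :=
    (Real.sqrt_le_left (by positivity)).2 (by rwa [inv_pow, ← pow_mul, mul_comm])
  calc (√N ^ (m⁻¹ : ℝ) * δ) ^ m = √N * δ ^ m := by rw [mul_pow, hP]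
    _ ≤ (δ ^ m)⁻¹ * δ ^ m := by gcongr
    _ = 1 := inv_mul_cancel₀ (by positivity)

lemma exists_grid_sizes {m : ℕ} {δ c₀ P : ℝ} (hc₀ : 0 < c₀) (hc₀₁ : c₀ ≤ 1) (hδ : 0 < δ)
    (hδc₀ : δ ≤ c₀ / (64 * (m + 1))) (hP : 1 ≤ P) (hPδ : P * δ ≤ 1) :
    ∃ K₁ K₂ : ℕ, P ^ 2 ≤ K₁ * K₂ ∧ (m + 1) * (8 * δ / c₀ * K₁) ≤ 1 / 2 ∧
      3 * δ * K₂ + 4 * δ / c₀ * K₁ + δ / 2 ≤ 128 * (m + 1) / c₀ * (P * δ) := by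
  set κ : ℝ := 32 * (m + 1) / c₀
  have hκ : 32 ≤ κ := by
    rw [le_div_iff₀ hc₀]; nlinarith [(m.cast_nonneg : (0 : ℝ) ≤ m)]
  have hκδ : κ * δ ≤ 1 / 2 := by
    rw [le_div_iff₀ (by positivity)] at hδc₀
    simp only [κ]; rw [div_mul_eq_mul_div, div_le_iff₀ hc₀]; linarith
  have hP₀ : 0 < P / κ := by positivity
  set K₁ := ⌈P / κ⌉₊
  have hK₁ : P / κ ≤ K₁ := Nat.le_ceil _
  have hK₁' : (K₁ : ℝ) < P / κ + 1 := Nat.ceil_lt_add_one hP₀.le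
  have hK₁₀ : (0 : ℝ) < K₁ := hP₀.trans_le hK₁
  set K₂ := ⌈P ^ 2 / K₁⌉₊
  have hK₂ : P ^ 2 / K₁ ≤ K₂ := Nat.le_ceil _
  have hK₂' : (K₂ : ℝ) < κ * P + 1 := by
    have : P ^ 2 / K₁ ≤ κ * P := by
      rw [div_le_iff₀ hK₁₀]
      calc P ^ 2 = κ * P * (P / κ) := by field_simp
        _ ≤ κ * P * K₁ := by gcongr
    linarith [Nat.ceil_lt_add_one (by positivity : 0 ≤ P ^ 2 / K₁)]
  have hK₁δ : κ * δ * K₁ ≤ P * δ + κ * δ := by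
    calc κ * δ * K₁ ≤ κ * δ * (P / κ + 1) := by gcongr
      _ = P * δ + κ * δ := by field_simp
  refine ⟨K₁, K₂, by rwa [div_le_iff₀ hK₁₀, mul_comm] at hK₂, ?_, ?_⟩
  · have : (m + 1) * (8 * δ / c₀ * K₁) = κ * δ * K₁ / 4 := by simp only [κ]; ring
    linarith
  · have h₁ : 4 * δ / c₀ * K₁ ≤ κ * δ * K₁ / 8 := by
      have : κ * δ * K₁ / 8 = (m + 1) * (4 * δ / c₀ * K₁) := by simp only [κ]; ring
      rw [this]
      exact le_mul_of_one_le_left (by positivity) (by linarith [(m.cast_nonneg : (0 : ℝ) ≤ m)])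
    have h₂ : 3 * δ * K₂ ≤ 3 * δ * (κ * P + 1) := by gcongr
    have h₃ : 128 * (m + 1) / c₀ * (P * δ) = 4 * κ * (P * δ) := by simp only [κ]; ring
    have hδPδ : δ ≤ P * δ := le_mul_of_one_le_left hδ.le hP
    have h₄ : 32 * δ ≤ κ * (P * δ) := by
      nlinarith [mul_le_mul_of_nonneg_right hκ (by positivity : 0 ≤ P * δ)]
    have h₅ : κ * δ ≤ κ * (P * δ) := by gcongr
    nlinarith

/-- sharpness of the bound `√N·δ^{n-1}` for `1 ≤ N ≤ δ^{2-2n}`. -/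
theorem statement2 (n : ℕ) (hn : 2 ≤ n) (c₀ : ℝ) (hc₀ : c₀ ∈ Set.Ioo (0 : ℝ) 1) :
    ∃ C δ₀ : ℝ, 0 < C ∧ δ₀ ∈ Set.Ioo (0 : ℝ) (1 / 100) ∧
      ∀ δ : ℝ, δ ∈ Set.Ioo (0 : ℝ) δ₀ →
      ∀ N : ℕ, 1 ≤ N → (N : ℝ) ≤ (δ ^ (2 * n - 2))⁻¹ →
        ∃ (M : ℕ) (a e : Fin M → EuclideanSpace ℝ (Fin n)),
          N ≤ M ∧ (∀ i, ‖e i‖ = 1) ∧ EssentiallyDistinct n δ c₀ a e ∧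
          volume (⋃ i, euclTube n δ (a i) (e i)) ≤
            ENNReal.ofReal (C * Real.sqrt N * δ ^ (n - 1)) := by
  obtain ⟨m, rfl⟩ : ∃ m, n = m + 1 := ⟨n - 1, by omega⟩
  obtain ⟨hc₀, hc₀₁⟩ := hc₀
  have hm : (1 : ℝ) ≤ m := by exact_mod_cast (by omega : 1 ≤ m)
  refine ⟨2 * (256 * (m + 1) / c₀) ^ m, c₀ / (64 * (m + 1)), by positivity,
    ⟨by positivity, by rw [div_lt_iff₀ (by positivity)]; linarith⟩, ?_⟩
  rintro δ ⟨hδ, hδ₀⟩ N hN hNδ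
  rw [show 2 * (m + 1) - 2 = 2 * m by omega] at hNδ
  obtain ⟨P, hP, hPδ, hPN⟩ := exists_one_le_pow_eq_sqrt (by omega) hN hδ hNδ
  obtain ⟨K₁, K₂, hK, hK₁, hW⟩ := exists_grid_sizes hc₀ hc₀₁.le hδ hδ₀.le hP hPδ
  have hδ₁ : δ ≤ 1 := by
    refine hδ₀.le.trans ((div_le_one (by positivity)).2 ?_); linarith
  obtain ⟨M, a, e, rfl, he, hED, hvol⟩ :=
    exists_essentiallyDistinct_family m K₁ K₂ hδ hδ₁ hc₀ hK₁
  refine ⟨_, a, e, ?_, he, hED, hvol.trans ?_⟩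
  · have : (N : ℝ) ≤ ((K₁ * K₂ : ℕ) : ℝ) ^ m :=
      calc (N : ℝ) = (P ^ m) ^ 2 := by rw [hPN, Real.sq_sqrt N.cast_nonneg]
        _ = (P ^ 2) ^ m := by ring
        _ ≤ _ := by push_cast; gcongr
    exact_mod_cast this
  · rw [Nat.add_sub_cancel, ← ENNReal.ofReal_pow (by positivity), ← ENNReal.ofReal_ofNat 2,
      ← ENNReal.ofReal_mul zero_le_two]
    refine ENNReal.ofReal_le_ofReal ?_
    calc 2 * (2 * (3 * δ * K₂ + 4 * δ / c₀ * K₁ + δ / 2)) ^ m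
        ≤ 2 * (2 * (128 * (m + 1) / c₀ * (P * δ))) ^ m := by gcongr
      _ = 2 * (256 * (m + 1) / c₀ * P * δ) ^ m := by congr 2; ring
      _ = _ := by rw [mul_pow, mul_pow, hPN]; ring
end
end

section
/- For every c > 0 and every integer n ≥ 1 there exist constants λ > 0 and c′ > 0, depending only on c and n, with the following property. Let (X, 𝓜, μ) be a measure space with 0 < μ(X) < ∞, let S ⊆ ℝⁿ be a Lebesgue-measurable set with 0 < volₙ(S) < ∞, and suppose that for each x ∈ S a measurable set E_x ∈ 𝓜 is given with μ(E_x) ≥ c·μ(X). Then there exist points x₀, x₁, …, x_n ∈ S such that: (a) μ(⋂_{i=0}^{n} E_{x_i}) ≥ c′·μ(X); and (b) the n-simplex with vertices x₀, …, x_n has volume at least λ·volₙ(S), i.e. |det(x₁ − x₀, …, x_n − x₀)| / n! ≥ λ·volₙ(S). -/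
/-!
The points are chosen in `n + 1` rounds. Before each round there is a set `C ⊆ S` of candidates,
a fixed fraction of `S` in volume, and a measurable `F ⊆ ⋂ E_{x_i}`, a fixed fraction of `X` in
mass, such that `μ(E_y ∩ F) ≥ θ μ(F)` for every candidate `y`.

A round measures a candidate `y` by its distance `Q y` from the affine span of the points chosen
so far. It takes a candidate `p` with `Q y ≤ 2 Q p` for the candidates `y` under consideration,
keeps those of them that are correlated with `p`, i.e. have `μ(E_y ∩ E_p ∩ F) ≥ θ²/2 · μ(F)`,
adds `p` to the points and replaces `F` by `E_p ∩ F`. If every such choice kept too little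
volume, `p` could be chosen again among the candidates not correlated with the earlier choices,
more than `2/θ²` times. The sets `E_p ∩ F` would then have relative mass `θ` and pairwise
intersections of relative mass below `θ²/2`, which Cauchy–Schwarz rules out. Since `x ↦ E_x` is
arbitrary, candidate sets need not be measurable: volumes are outer measures, and this pigeonhole
argument replaces averaging over `C`.

In the end all candidates lie in the box with half-widths `2 Q(x_i)` along the Gram–Schmidt basis
of the `x_i - x_0`, whose volume is `4ⁿ |det(x_i - x_0)|`.
-/

open MeasureTheory Metric Set Submodule InnerProductSpace
open scoped RealInnerProductSpace

noncomputable section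

section Geometry

variable {V : Type*} [NormedAddCommGroup V] [InnerProductSpace ℝ V]

theorem abs_inner_le_infDist {K : Submodule ℝ V} {e : V} (he : ‖e‖ = 1) (hK : ∀ k ∈ K, ⟪e, k⟫ = 0)
    (v : V) : |⟪e, v⟫| ≤ infDist v K := by
  refine (le_infDist ⟨0, K.zero_mem⟩).2 fun k hk => ?_
  calc |⟪e, v⟫| = |⟪e, v - k⟫| := by rw [inner_sub_right, hK k hk, sub_zero]
    _ ≤ ‖e‖ * ‖v - k‖ := abs_real_inner_le_norm e _
    _ = dist v k := by rw [he, one_mul, dist_eq_norm]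

variable [FiniteDimensional ℝ V]

theorem OrthonormalBasis.volume_setOf_abs_inner_le [MeasurableSpace V] [BorelSpace V]
    {ι : Type*} [Fintype ι] (b : OrthonormalBasis ι ℝ V) (r : ι → ℝ) :
    volume {y : V | ∀ i, |⟪b i, y⟫| ≤ r i} = ∏ i, ENNReal.ofReal (2 * r i) := by
  have hset : {y : V | ∀ i, |⟪b i, y⟫| ≤ r i} =
      b.repr ⁻¹' (WithLp.ofLp ⁻¹' univ.pi fun i => Icc (-r i) (r i)) := by
    ext y
    simp only [mem_ofPred_eq, mem_preimage, mem_univ_pi, mem_Icc, abs_le,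
      b.repr_apply_apply]
  have hbox : MeasurableSet (univ.pi fun i => Icc (-r i) (r i)) :=
    MeasurableSet.univ_pi fun _ => measurableSet_Icc
  rw [hset, b.repr.measurePreserving.measure_preimage
      (hbox.preimage (PiLp.volume_preserving_ofLp ι).measurable).nullMeasurableSet,
    (PiLp.volume_preserving_ofLp ι).measure_preimage hbox.nullMeasurableSet, volume_pi_pi]
  simp [Real.volume_Icc, two_mul]

variable {ι : Type*} [Fintype ι] [LinearOrder ι] [LocallyFiniteOrderBot ι]
  [WellFoundedLT ι]

theorem inner_gramSchmidtOrthonormalBasis_eq_zero_of_mem_span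
    (h : Module.finrank ℝ V = Fintype.card ι) (f : ι → V) {i : ι} {k : V}
    (hk : k ∈ span ℝ (f '' Iio i)) : ⟪gramSchmidtOrthonormalBasis h f i, k⟫ = 0 := by
  induction hk using Submodule.span_induction with
  | mem v hv =>
    obtain ⟨j, hj, rfl⟩ := hv
    exact gramSchmidtOrthonormalBasis_inv_triangular h f hj
  | zero => exact inner_zero_right _
  | add u v _ _ hu hv => rw [inner_add_right, hu, hv, add_zero]
  | smul a v _ hv => rw [inner_smul_right, hv, mul_zero]

theorem infDist_span_le_abs_inner_gramSchmidtOrthonormalBasis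
    (h : Module.finrank ℝ V = Fintype.card ι) (f : ι → V) (i : ι) :
    infDist (f i) (span ℝ (f '' Iio i)) ≤ |⟪gramSchmidtOrthonormalBasis h f i, f i⟫| := by
  set e := gramSchmidtOrthonormalBasis h f
  have hmem : f i - ⟪e i, f i⟫ • e i ∈ span ℝ (f '' Iio i) := by
    have hsum : f i - ⟪e i, f i⟫ • e i = ∑ j ∈ Finset.univ.erase i, ⟪e j, f i⟫ • e j := by
      rw [sub_eq_iff_eq_add', Finset.add_sum_erase _ (fun j => ⟪e j, f i⟫ • e j)
        (Finset.mem_univ i), e.sum_repr']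
    rw [hsum]
    refine Submodule.sum_mem _ fun j hj => ?_
    rcases lt_or_gt_of_ne (Finset.ne_of_mem_erase hj) with hji | hij
    · by_cases h0 : gramSchmidtNormed ℝ f j = 0
      · rw [inner_gramSchmidtOrthonormalBasis_eq_zero h h0, zero_smul]
        exact zero_mem _
      · refine smul_mem _ _ ?_
        rw [gramSchmidtOrthonormalBasis_apply h h0, ← span_gramSchmidt_Iio ℝ f i,
          ← span_gramSchmidtNormed]
        exact subset_span (mem_image_of_mem _ hji)
    · rw [gramSchmidtOrthonormalBasis_inv_triangular h f hij, zero_smul]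
      exact zero_mem _
  calc infDist (f i) (span ℝ (f '' Iio i)) ≤ dist (f i) (f i - ⟪e i, f i⟫ • e i) :=
        infDist_le_dist_of_mem hmem
    _ = |⟪e i, f i⟫| := by simp [norm_smul, e.orthonormal.1 i]

theorem abs_det_eq_prod_abs_inner_gramSchmidtOrthonormalBasis
    (h : Module.finrank ℝ V = Fintype.card ι) (f : ι → V) (b : OrthonormalBasis ι ℝ V) :
    |b.toBasis.det f| = ∏ i, |⟪gramSchmidtOrthonormalBasis h f i, f i⟫| := by
  set e := gramSchmidtOrthonormalBasis h f
  have hbe : |b.toBasis.det e| = 1 := by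
    rcases b.det_to_matrix_orthonormalBasis_real e with h1 | h1 <;> simp [h1]
  rw [AlternatingMap.eq_smul_basis_det e.toBasis b.toBasis.det, AlternatingMap.smul_apply,
    smul_eq_mul, abs_mul, OrthonormalBasis.coe_toBasis, hbe, one_mul,
    gramSchmidtOrthonormalBasis_det, Finset.abs_prod]

theorem volume_le_of_infDist_sub_le [MeasurableSpace V] [BorelSpace V]
    (b : OrthonormalBasis ι ℝ V) (f : ι → V) (a : V)
    {C : Set V} (hC : ∀ y ∈ C, ∀ i, infDist (y - a) (span ℝ (f '' Iio i)) ≤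
      2 * infDist (f i) (span ℝ (f '' Iio i))) :
    volume C ≤ ENNReal.ofReal (4 ^ Fintype.card ι * |b.toBasis.det f|) := by
  have h : Module.finrank ℝ V = Fintype.card ι := Module.finrank_eq_card_basis b.toBasis
  set e := gramSchmidtOrthonormalBasis h f
  have hsub : C ⊆ (· + -a) ⁻¹' {z | ∀ i, |⟪e i, z⟫| ≤ 2 * |⟪e i, f i⟫|} := fun y hy i =>
    calc |⟪e i, y + -a⟫| ≤ infDist (y - a) (span ℝ (f '' Iio i)) := by
          rw [← sub_eq_add_neg]
          exact abs_inner_le_infDist (e.orthonormal.1 i)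
            (fun k hk => inner_gramSchmidtOrthonormalBasis_eq_zero_of_mem_span h f hk) _
      _ ≤ 2 * infDist (f i) (span ℝ (f '' Iio i)) := hC y hy i
      _ ≤ 2 * |⟪e i, f i⟫| := by
          gcongr
          exact infDist_span_le_abs_inner_gramSchmidtOrthonormalBasis h f i
  calc volume C ≤ ∏ i, ENNReal.ofReal (2 * (2 * |⟪e i, f i⟫|)) := by
        refine (measure_mono hsub).trans_eq ?_
        rw [measure_preimage_add_right, e.volume_setOf_abs_inner_le]
    _ = ENNReal.ofReal (4 ^ Fintype.card ι * |b.toBasis.det f|) := by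
        rw [← ENNReal.ofReal_prod_of_nonneg (fun i _ => by positivity),
          abs_det_eq_prod_abs_inner_gramSchmidtOrthonormalBasis h f b, Finset.prod_mul_distrib,
          Finset.prod_mul_distrib, Finset.prod_const, Finset.card_univ, ← mul_assoc, ← mul_pow]
        norm_num [e]

end Geometry

section Correlation

theorem sq_sum_indicator_one {X ι : Type*} (s : Finset ι) (G : ι → Set X) (ω : X) :
    (∑ i ∈ s, (G i).indicator (1 : X → ℝ) ω) ^ 2 =
      ∑ i ∈ s, ∑ j ∈ s, (G i ∩ G j).indicator 1 ω := by
  simp only [sq, Finset.sum_mul_sum, inter_indicator_one, Pi.mul_apply]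

theorem two_mul_mul_integral_le {X : Type*} [MeasurableSpace X] {ρ : Measure X}
    [IsFiniteMeasure ρ] {g : X → ℝ} (hg : Integrable g ρ) (hg₂ : Integrable (fun ω => g ω ^ 2) ρ)
    (t : ℝ) : 2 * t * ∫ ω, g ω ∂ρ ≤ ∫ ω, g ω ^ 2 ∂ρ + t ^ 2 * ρ.real univ := by
  have h := integral_mono (hg.const_mul (2 * t)) (hg₂.add (integrable_const (t ^ 2)))
    fun ω => (two_mul_le_add_sq t (g ω)).trans_eq (add_comm _ _)
  rwa [integral_const_mul, Pi.add_def, integral_add hg₂ (integrable_const _), integral_const,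
    smul_eq_mul, mul_comm (ρ.real univ)] at h

theorem card_mul_sq_le_two_of_pairwise_measureReal_inter_le {X ι : Type*} [MeasurableSpace X]
    (ρ : Measure X) [IsFiniteMeasure ρ] (hρ : 0 < ρ.real univ) (s : Finset ι) (G : ι → Set X)
    {θ : ℝ} (hθ : 0 ≤ θ) (hG : ∀ i ∈ s, MeasurableSet (G i) ∧ θ * ρ.real univ ≤ ρ.real (G i))
    (hpair : ∀ i ∈ s, ∀ j ∈ s, i ≠ j → ρ.real (G i ∩ G j) ≤ θ ^ 2 / 2 * ρ.real univ) :
    s.card * θ ^ 2 ≤ 2 := by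
  classical
  set U := ρ.real univ
  set M : ℝ := (s.card : ℝ)
  set g : X → ℝ := fun ω => ∑ i ∈ s, (G i).indicator 1 ω
  have hint : ∀ i ∈ s, Integrable ((G i).indicator (1 : X → ℝ)) ρ := fun i hi =>
    (integrable_const (1 : ℝ)).indicator (hG i hi).1
  have hint₂ : ∀ i ∈ s, Integrable (fun ω => ∑ j ∈ s, (G i ∩ G j).indicator (1 : X → ℝ) ω) ρ :=
    fun i hi => integrable_finsetSum s fun j hj =>
      (integrable_const (1 : ℝ)).indicator ((hG i hi).1.inter (hG j hj).1)
  have hmean : M * θ * U ≤ ∫ ω, g ω ∂ρ := by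
    rw [integral_finsetSum s hint]
    calc M * θ * U = ∑ _i ∈ s, θ * U := by simp [M, mul_assoc]
      _ ≤ ∑ i ∈ s, ∫ ω, (G i).indicator 1 ω ∂ρ := Finset.sum_le_sum fun i hi => by
          rw [integral_indicator_one (hG i hi).1]; exact (hG i hi).2
  have hsecond : ∫ ω, g ω ^ 2 ∂ρ ≤ M * U + M ^ 2 * (θ ^ 2 / 2 * U) := by
    simp_rw [g, sq_sum_indicator_one]
    rw [integral_finsetSum s hint₂]
    calc ∑ i ∈ s, ∫ ω, ∑ j ∈ s, (G i ∩ G j).indicator 1 ω ∂ρ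
        = ∑ i ∈ s, ∑ j ∈ s, ρ.real (G i ∩ G j) := Finset.sum_congr rfl fun i hi => by
          rw [integral_finsetSum]
          exacts [Finset.sum_congr rfl fun j hj =>
            integral_indicator_one ((hG i hi).1.inter (hG j hj).1),
            fun j hj => (integrable_const (1 : ℝ)).indicator ((hG i hi).1.inter (hG j hj).1)]
      _ ≤ ∑ i ∈ s, ∑ j ∈ s, ((if i = j then U else 0) + θ ^ 2 / 2 * U) := by
          refine Finset.sum_le_sum fun i hi => Finset.sum_le_sum fun j hj => ?_
          by_cases hij : i = j
          · subst hij
            have hU : 0 ≤ θ ^ 2 / 2 * U := mul_nonneg (by positivity) hρ.le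
            simpa using (measureReal_mono (subset_univ _)).trans (le_add_of_nonneg_right hU)
          · simpa [hij] using hpair i hi j hj hij
      _ = M * U + M ^ 2 * (θ ^ 2 / 2 * U) := by
          simp [Finset.sum_add_distrib, Finset.sum_ite_eq, M, sq]
          ring
  have hamgm := two_mul_mul_integral_le (integrable_finsetSum s hint)
    (by simpa only [g, sq_sum_indicator_one] using integrable_finsetSum s hint₂) (M * θ)
  have key : M * (M * θ ^ 2) * U ≤ M * 2 * U := by
    nlinarith [mul_le_mul_of_nonneg_left hmean (by positivity : 0 ≤ 2 * (M * θ))]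
  rcases (Nat.cast_nonneg s.card : (0 : ℝ) ≤ M).eq_or_lt with hM | hM
  · simp [M, ← hM]
  · exact le_of_mul_le_mul_left (le_of_mul_le_mul_right key hρ) hM

theorem length_mul_sq_le_two_of_pairwise {X α : Type*} [MeasurableSpace X] (ρ : Measure X)
    [IsFiniteMeasure ρ] (hρ : 0 < ρ.real univ) (E : α → Set X) {θ : ℝ} (hθ : 0 ≤ θ) {L : List α}
    (hL : ∀ w ∈ L, MeasurableSet (E w) ∧ θ * ρ.real univ ≤ ρ.real (E w))
    (hpair : L.Pairwise fun v w => ρ.real (E v ∩ E w) < θ ^ 2 / 2 * ρ.real univ) :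
    L.length * θ ^ 2 ≤ 2 := by
  have hlt : ∀ i j : Fin L.length, i < j → ρ.real (E L[i] ∩ E L[j]) ≤ θ ^ 2 / 2 * ρ.real univ :=
    fun i j h => (List.pairwise_iff_getElem.1 hpair i j i.2 j.2 h).le
  simpa using card_mul_sq_le_two_of_pairwise_measureReal_inter_le ρ hρ Finset.univ
    (fun i : Fin L.length => E L[i]) hθ (fun i _ => hL _ (List.getElem_mem _))
    fun i _ j _ hij =>
      (lt_or_gt_of_ne hij).elim (hlt i j) fun h => inter_comm (E L[i]) _ ▸ hlt j i h

theorem exists_forall_le_two_mul {α : Type*} {P : Set α} (hP : P.Nonempty) {Q : α → ℝ}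
    (hQ : ∀ x ∈ P, 0 ≤ Q x) (hbdd : BddAbove (Q '' P)) : ∃ p ∈ P, ∀ y ∈ P, Q y ≤ 2 * Q p := by
  obtain ⟨x, hx⟩ := id hP
  have hle : ∀ y ∈ P, Q y ≤ sSup (Q '' P) := fun y hy => le_csSup hbdd (mem_image_of_mem Q hy)
  rcases ((hQ x hx).trans (hle x hx)).eq_or_lt with h0 | hpos
  · exact ⟨x, hx, fun y hy => by linarith [hle y hy, hQ x hx]⟩
  · obtain ⟨_, ⟨p, hp, rfl⟩, hlt⟩ := exists_lt_of_lt_csSup (hP.image Q) (half_lt_self hpos)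
    exact ⟨p, hp, fun y hy => by linarith [hle y hy]⟩

theorem exists_lt_measure_inter_setOf_le {α : Type*} [MeasurableSpace α] (ν : Measure α)
    (C : Set α) (Q : α → ℝ) {a : ENNReal} (ha : a < ν C) :
    ∃ R : ℝ, a < ν (C ∩ {y | Q y ≤ R}) := by
  have hmono : Monotone fun R : ℝ => C ∩ {y | Q y ≤ R} :=
    fun R R' h => inter_subset_inter_right _ fun y hy => le_trans hy h
  have hC : ⋃ R : ℝ, C ∩ {y | Q y ≤ R} = C := by
    rw [← inter_iUnion, inter_eq_left]
    exact fun y _ => mem_iUnion.2 ⟨Q y, show Q y ≤ Q y from le_rfl⟩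
  rw [← hC, hmono.measure_iUnion] at ha
  exact lt_iSup_iff.1 ha

section Greedy

variable {α : Type*} [MeasurableSpace α] {ν : Measure α} {C D : Set α} {Q : α → ℝ}
  {Y : α → Set α} {m : ℕ}

theorem exists_greedy_step (hD : ν C < 2 * ν D) (hDC : D ⊆ C) (hQ : ∀ x ∈ C, 0 ≤ Q x)
    (hbdd : BddAbove (Q '' D))
    (hsmall : ∀ p ∈ C, ∀ C' ⊆ C, (∀ y ∈ C', Q y ≤ 2 * Q p ∧ y ∈ Y p) → 2 * m * ν C' < ν C)
    {L : List α} (hL : L.length < m)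
    (hLD : 2 * m * ν D ≤ 2 * m * ν (D \ ⋃ w ∈ L, Y w) + L.length * ν C) :
    ∃ p ∈ D \ ⋃ w ∈ L, Y w,
      2 * m * ν D ≤ 2 * m * ν (D \ ⋃ w ∈ p :: L, Y w) + (L.length + 1) * ν C := by
  set D' := D \ ⋃ w ∈ L, Y w
  have hD'C : D' ⊆ C := sdiff_subset.trans hDC
  have hD' : ν D' ≠ 0 := by
    intro h0
    have hm : (m : ENNReal) ≠ 0 := by exact_mod_cast (show m ≠ 0 by omega)
    have hlt : (m : ENNReal) * ν C < m * (2 * ν D) :=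
      ENNReal.mul_lt_mul_right hm (ENNReal.natCast_ne_top m) hD
    rw [h0, mul_zero, zero_add] at hLD
    refine (hLD.trans ?_).not_gt (hlt.trans_eq (by ring))
    gcongr
  obtain ⟨p, hpD', hfar⟩ := exists_forall_le_two_mul (nonempty_of_measure_ne_zero hD')
    (fun x hx => hQ x (hD'C hx)) (hbdd.mono (image_mono sdiff_subset))
  refine ⟨p, hpD', ?_⟩
  have hsub : D' \ Y p ⊆ D \ ⋃ w ∈ p :: L, Y w := by
    intro y hy
    simp only [List.mem_cons, iUnion_iUnion_eq_or_left, mem_sdiff, mem_union, not_or] at hy ⊢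
    exact ⟨hy.1.1, hy.2, hy.1.2⟩
  calc 2 * m * ν D ≤ 2 * m * (ν (D' ∩ Y p) + ν (D' \ Y p)) + L.length * ν C := by
        grw [hLD, measure_le_inter_add_sdiff _ D' (Y p)]
    _ = 2 * m * ν (D' ∩ Y p) + 2 * m * ν (D' \ Y p) + L.length * ν C := by ring
    _ ≤ ν C + 2 * m * ν (D \ ⋃ w ∈ p :: L, Y w) + L.length * ν C := by
        gcongr
        exact (hsmall p (hD'C hpD') _ (inter_subset_left.trans hD'C)
          fun y hy => ⟨hfar y hy.1, hy.2⟩).le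
    _ = _ := by ring

theorem exists_pairwise_list (hD : ν C < 2 * ν D) (hDC : D ⊆ C) (hQ : ∀ x ∈ C, 0 ≤ Q x)
    (hbdd : BddAbove (Q '' D))
    (hsmall : ∀ p ∈ C, ∀ C' ⊆ C, (∀ y ∈ C', Q y ≤ 2 * Q p ∧ y ∈ Y p) → 2 * m * ν C' < ν C) :
    ∃ L : List α, L.length = m ∧ (∀ w ∈ L, w ∈ C) ∧ L.Pairwise fun v w => v ∉ Y w := by
  suffices ∀ j ≤ m, ∃ L : List α, L.length = j ∧ (∀ w ∈ L, w ∈ C) ∧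
      L.Pairwise (fun v w => v ∉ Y w) ∧
      2 * m * ν D ≤ 2 * m * ν (D \ ⋃ w ∈ L, Y w) + j * ν C from
    (this m le_rfl).imp fun L hL => ⟨hL.1, hL.2.1, hL.2.2.1⟩
  intro j
  induction j with
  | zero => exact fun _ => ⟨[], rfl, by simp, List.Pairwise.nil, by simp⟩
  | succ j ih =>
    intro hj
    obtain ⟨L, rfl, hLC, hLY, hLD⟩ := ih (by omega)
    obtain ⟨p, hp, hpD⟩ := exists_greedy_step hD hDC hQ hbdd hsmall hj hLD
    refine ⟨p :: L, rfl, ?_, List.pairwise_cons.2 ⟨fun w hw hpw => hp.2 (mem_biUnion hw hpw), hLY⟩,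
      by exact_mod_cast hpD⟩
    simpa using ⟨hDC hp.1, hLC⟩

end Greedy

theorem exists_far_correlated {α X : Type*} [MeasurableSpace α] [MeasurableSpace X]
    (ν : Measure α) (ρ : Measure X) [IsFiniteMeasure ρ] (hρ : 0 < ρ.real univ) (E : α → Set X)
    {θ : ℝ} (hθ : 0 ≤ θ) {m : ℕ} (hm : 2 < m * θ ^ 2) {C : Set α} (hC₀ : ν C ≠ 0)
    (hC : ν C ≠ ⊤) (hE : ∀ x ∈ C, MeasurableSet (E x) ∧ θ * ρ.real univ ≤ ρ.real (E x))
    (Q : α → ℝ) (hQ : ∀ x ∈ C, 0 ≤ Q x) :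
    ∃ p ∈ C, ∃ C' ⊆ C, ν C ≤ 2 * m * ν C' ∧
      ∀ y ∈ C', Q y ≤ 2 * Q p ∧ θ ^ 2 / 2 * ρ.real univ ≤ ρ.real (E y ∩ E p) := by
  by_contra hfail
  -- `Q` may be unbounded on `C`; the greedy choices are made where `Q ≤ R`.
  obtain ⟨R, hR⟩ := exists_lt_measure_inter_setOf_le ν C Q (ENNReal.half_lt_self hC₀ hC)
  obtain ⟨L, hlen, hLC, hLY⟩ := exists_pairwise_list
    (Y := fun w => {y | θ ^ 2 / 2 * ρ.real univ ≤ ρ.real (E y ∩ E w)})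
    (by rwa [ENNReal.div_lt_iff (by norm_num) (by norm_num), mul_comm] at hR) inter_subset_left hQ
    ⟨R, forall_mem_image.2 fun y hy => hy.2⟩
    fun p hp C' hC' h => not_le.1 fun hbig => hfail ⟨p, hp, C', hC', hbig, h⟩
  have := length_mul_sq_le_two_of_pairwise ρ hρ E hθ (fun w hw => hE w (hLC w hw))
    (hLY.imp fun h => not_le.1 h)
  rw [hlen] at this
  linarith

end Correlation

section Selection

variable {V X : Type*} [NormedAddCommGroup V] [NormedSpace ℝ V]

def simplexHeight (x : ℕ → V) (i : ℕ) (y : V) : ℝ :=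
  infDist (y - x 0) (span ℝ ((fun l => x (l + 1) - x 0) '' Iio i))

theorem simplexHeight_update {x : ℕ → V} {i r : ℕ} (hi : i < r) (v : V) :
    simplexHeight (Function.update x r v) i = simplexHeight x i := by
  have hx : ∀ l ≤ i, Function.update x r v l = x l := fun l hl =>
    Function.update_of_ne (by omega) _ _
  ext y
  simp only [simplexHeight, hx 0 (Nat.zero_le i)]
  congr 3
  exact image_congr fun l hl => by rw [hx (l + 1) hl]

theorem forall_lt_succ_update {α : Type*} {P : ℕ → α → Prop} {x : ℕ → α} {r : ℕ} {a : α}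
    (hx : ∀ i < r, P i (x i)) (ha : P r a) : ∀ i < r + 1, P i (Function.update x r a i) := by
  intro i hi
  rcases (Nat.lt_succ_iff.1 hi).lt_or_eq with hi | rfl
  · rw [Function.update_of_ne hi.ne]; exact hx i hi
  · rw [Function.update_self]; exact ha

def densityLevel (c : ℝ) : ℕ → ℝ
  | 0 => c
  | r + 1 => densityLevel c r ^ 2 / 2

def roundCount (θ : ℝ) : ℕ := ⌊2 / θ ^ 2⌋₊ + 1

def volumeLoss (c : ℝ) : ℕ → ℕ
  | 0 => 1
  | r + 1 => 2 * roundCount (densityLevel c r) * volumeLoss c r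

def massLevel (c : ℝ) : ℕ → ℝ
  | 0 => 1
  | r + 1 => densityLevel c r * massLevel c r

theorem densityLevel_pos {c : ℝ} (hc : 0 < c) (r : ℕ) : 0 < densityLevel c r := by
  induction r with
  | zero => exact hc
  | succ r ih => simp only [densityLevel]; positivity

theorem massLevel_pos {c : ℝ} (hc : 0 < c) (r : ℕ) : 0 < massLevel c r := by
  induction r with
  | zero => exact one_pos
  | succ r ih => simp only [massLevel]; exact mul_pos (densityLevel_pos hc r) ih

theorem volumeLoss_pos (c : ℝ) (r : ℕ) : 0 < volumeLoss c r := by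
  induction r with
  | zero => exact one_pos
  | succ r ih => simp only [volumeLoss, roundCount]; positivity

theorem two_lt_roundCount_mul_sq {θ : ℝ} (hθ : 0 < θ) : 2 < roundCount θ * θ ^ 2 := by
  have h := Nat.lt_floor_add_one (2 / θ ^ 2)
  rw [div_lt_iff₀ (by positivity)] at h
  simpa [roundCount] using h

variable [MeasureSpace V] [MeasurableSpace X]

/-- The state after `r` rounds: the points `x 0, …, x (r - 1)` have been chosen. -/
structure Selection (μ : Measure X) (S : Set V) (Ex : V → Set X) (c : ℝ) (r : ℕ) (x : ℕ → V)
    (C : Set V) (F : Set X) : Prop where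
  mem : ∀ i < r, x i ∈ S
  subset : C ⊆ S
  volume_le : volume S ≤ volumeLoss c r * volume C
  measurableSet : MeasurableSet F
  subset_inter : ∀ i < r, F ⊆ Ex (x i)
  massLevel_le : massLevel c r * μ.real univ ≤ μ.real F
  densityLevel_le : ∀ y ∈ C, densityLevel c r * μ.real F ≤ μ.real (Ex y ∩ F)
  simplexHeight_le : ∀ i, i + 1 < r → ∀ y ∈ C,
    simplexHeight x i y ≤ 2 * simplexHeight x i (x (i + 1))

variable {μ : Measure X} [IsFiniteMeasure μ] {S : Set V} {Ex : V → Set X} {c : ℝ}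

theorem selection_zero (hc : 0 ≤ c) (hEx : ∀ y ∈ S, ENNReal.ofReal c * μ univ ≤ μ (Ex y))
    (x : ℕ → V) : Selection μ S Ex c 0 x S univ where
  mem := by simp
  subset := subset_rfl
  volume_le := by simp [volumeLoss]
  measurableSet := MeasurableSet.univ
  subset_inter := by simp
  massLevel_le := by simp [massLevel]
  densityLevel_le y hy := by
    have h := ENNReal.toReal_mono (measure_ne_top μ _) (hEx y hy)
    rw [ENNReal.toReal_mul, ENNReal.toReal_ofReal hc] at h
    rwa [inter_univ, densityLevel]
  simplexHeight_le := by simp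

namespace Selection

variable {r : ℕ} {x : ℕ → V} {C : Set V} {F : Set X}

theorem exists_far_correlated (h : Selection μ S Ex c r x C F) (hc : 0 < c)
    (hμ : 0 < μ.real univ) (hS₀ : volume S ≠ 0) (hS : volume S ≠ ⊤)
    (hEx : ∀ y ∈ S, MeasurableSet (Ex y)) (Q : V → ℝ) (hQ : ∀ y, 0 ≤ Q y) :
    ∃ p ∈ C, ∃ C' ⊆ C, volume C ≤ 2 * roundCount (densityLevel c r) * volume C' ∧
      ∀ y ∈ C', Q y ≤ 2 * Q p ∧
        densityLevel c r ^ 2 / 2 * μ.real F ≤ μ.real (Ex y ∩ Ex p ∩ F) := by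
  have hθ := densityLevel_pos hc r
  have hres : ∀ s, (μ.restrict F).real s = μ.real (s ∩ F) := fun s =>
    measureReal_restrict_apply' h.measurableSet
  have hF : 0 < (μ.restrict F).real univ := by
    rw [hres, univ_inter]
    exact (mul_pos (massLevel_pos hc r) hμ).trans_le h.massLevel_le
  have hC₀ : volume C ≠ 0 := fun h0 => hS₀ (le_zero_iff.1 (by simpa [h0] using h.volume_le))
  have hC : volume C ≠ ⊤ := ne_top_of_le_ne_top hS (measure_mono h.subset)
  simpa [hres] using _root_.exists_far_correlated volume (μ.restrict F) hF Ex hθ.le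
    (two_lt_roundCount_mul_sq hθ) hC₀ hC
    (fun y hy => ⟨hEx y (h.subset hy), by simpa [hres] using h.densityLevel_le y hy⟩) Q
    fun y _ => hQ y

theorem succ (h : Selection μ S Ex c r x C F) (hc : 0 < c) (hμ : 0 < μ.real univ)
    (hS₀ : volume S ≠ 0) (hS : volume S ≠ ⊤) (hEx : ∀ y ∈ S, MeasurableSet (Ex y)) :
    ∃ x' C' F', Selection μ S Ex c (r + 1) x' C' F' := by
  set θ := densityLevel c r
  have hθ : 0 < θ := densityLevel_pos hc r
  -- For `r = 0` no height bound is recorded, so the junk index `0 - 1 = 0` does no harm.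
  obtain ⟨p, hpC, C', hC'C, hvol, hC'⟩ := h.exists_far_correlated hc hμ hS₀ hS hEx
    (simplexHeight x (r - 1)) fun y => infDist_nonneg
  refine ⟨Function.update x r p, C', Ex p ∩ F,
    forall_lt_succ_update h.mem (h.subset hpC), h.subset.trans' hC'C, ?_,
    (hEx p (h.subset hpC)).inter h.measurableSet,
    forall_lt_succ_update (P := fun _ v => Ex p ∩ F ⊆ Ex v)
      (fun i hi => inter_subset_right.trans (h.subset_inter i hi)) inter_subset_left, ?_, ?_, ?_⟩
  · calc volume S ≤ volumeLoss c r * volume C := h.volume_le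
      _ ≤ volumeLoss c r * (2 * roundCount θ * volume C') := by gcongr
      _ = volumeLoss c (r + 1) * volume C' := by simp only [volumeLoss]; push_cast; ring
  · calc massLevel c (r + 1) * μ.real univ = θ * (massLevel c r * μ.real univ) := by
          simp only [massLevel, θ]; ring
      _ ≤ θ * μ.real F := by gcongr; exact h.massLevel_le
      _ ≤ μ.real (Ex p ∩ F) := h.densityLevel_le p hpC
  · intro y hy
    calc densityLevel c (r + 1) * μ.real (Ex p ∩ F) ≤ θ ^ 2 / 2 * μ.real F := by
          simp only [densityLevel]; gcongr; exacts [measure_ne_top μ F, inter_subset_right]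
      _ ≤ μ.real (Ex y ∩ (Ex p ∩ F)) := by rw [← inter_assoc]; exact (hC' y hy).2
  · intro i hi y hy
    rcases (Nat.lt_succ_iff.1 hi).lt_or_eq with hi | rfl
    · rw [simplexHeight_update (by omega), Function.update_of_ne hi.ne]
      exact h.simplexHeight_le i hi y (hC'C hy)
    · rw [simplexHeight_update (by omega), Function.update_self]
      simpa using (hC' y hy).1

end Selection

theorem exists_selection (hc : 0 < c) (hμ : 0 < μ.real univ) (hS₀ : volume S ≠ 0)
    (hS : volume S ≠ ⊤)
    (hEx : ∀ y ∈ S, MeasurableSet (Ex y) ∧ ENNReal.ofReal c * μ univ ≤ μ (Ex y)) (r : ℕ) :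
    ∃ x C F, Selection μ S Ex c r x C F := by
  induction r with
  | zero => exact ⟨fun _ => 0, S, univ, selection_zero hc.le (fun y hy => (hEx y hy).2) _⟩
  | succ r ih =>
    obtain ⟨x, C, F, h⟩ := ih
    exact h.succ hc hμ hS₀ hS fun y hy => (hEx y hy).1

end Selection

theorem volume_le_of_simplexHeight_le {n : ℕ} (x : ℕ → EuclideanSpace ℝ (Fin n))
    {C : Set (EuclideanSpace ℝ (Fin n))}
    (hC : ∀ i < n, ∀ y ∈ C, simplexHeight x i y ≤ 2 * simplexHeight x i (x (i + 1))) :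
    volume C ≤
      ENNReal.ofReal (4 ^ n * |(Matrix.of fun i j : Fin n => (x (i + 1) - x 0) j).det|) := by
  have hspan : ∀ i : Fin n, span ℝ ((fun i : Fin n => x (i + 1) - x 0) '' Iio i) =
      span ℝ ((fun l => x (l + 1) - x 0) '' Iio (i : ℕ)) := fun i => by
    rw [← Fin.image_val_Iio, ← image_comp]; rfl
  have h := volume_le_of_infDist_sub_le (EuclideanSpace.basisFun (Fin n) ℝ)
    (fun i => x (i + 1) - x 0) (x 0) (C := C) fun y hy i => by
      simpa only [hspan, simplexHeight] using hC i i.2 y hy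
  have hdet : (EuclideanSpace.basisFun (Fin n) ℝ).toBasis.det (fun i => x (i + 1) - x 0) =
      (Matrix.of fun i j : Fin n => (x (i + 1) - x 0) j).det := by
    rw [Module.Basis.det_apply, ← Matrix.det_transpose]
    congr 1
  rwa [hdet, Fintype.card_fin] at h

theorem statement8_general (c : ℝ) (hc : 0 < c) (n : ℕ) :
    ∃ lam c' : ℝ, 0 < lam ∧ 0 < c' ∧
      ∀ (X : Type*) [MeasurableSpace X] (μ : Measure X),
        0 < μ Set.univ → μ Set.univ < ⊤ →
      ∀ S : Set (EuclideanSpace ℝ (Fin n)), MeasurableSet S →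
        0 < volume S → volume S < ⊤ →
      ∀ Ex : EuclideanSpace ℝ (Fin n) → Set X,
        (∀ x ∈ S, MeasurableSet (Ex x) ∧ ENNReal.ofReal c * μ Set.univ ≤ μ (Ex x)) →
        ∃ x : Fin (n + 1) → EuclideanSpace ℝ (Fin n),
          (∀ i, x i ∈ S) ∧
          ENNReal.ofReal c' * μ Set.univ ≤ μ (⋂ i, Ex (x i)) ∧
          lam * (volume S).toReal ≤
            |(Matrix.of fun i j : Fin n => (x i.succ - x 0) j).det| / (n.factorial : ℝ) := by
  set K : ℝ := volumeLoss c (n + 1) * 4 ^ n * n.factorial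
  have hK : 0 < K := by have := volumeLoss_pos c (n + 1); positivity
  refine ⟨1 / K, massLevel c (n + 1), by positivity, massLevel_pos hc _, ?_⟩
  intro X _ μ hμ₀ hμ S _ hS₀ hS Ex hEx
  have : IsFiniteMeasure μ := ⟨hμ⟩
  obtain ⟨x, C, F, h⟩ := exists_selection hc (ENNReal.toReal_pos hμ₀.ne' hμ.ne) hS₀.ne' hS.ne
    hEx (n + 1)
  refine ⟨fun i => x i, fun i => h.mem i i.2, ?_, ?_⟩
  · calc ENNReal.ofReal (massLevel c (n + 1)) * μ univ ≤ μ F := by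
          rw [← ofReal_measureReal (measure_ne_top μ univ),
            ← ENNReal.ofReal_mul (massLevel_pos hc _).le, ← ofReal_measureReal (measure_ne_top μ F)]
          exact ENNReal.ofReal_le_ofReal h.massLevel_le
      _ ≤ μ (⋂ i : Fin (n + 1), Ex (x i)) :=
          measure_mono (subset_iInter fun i => h.subset_inter i i.2)
  · have hvol := h.volume_le.trans <| mul_le_mul_right
      (volume_le_of_simplexHeight_le x fun i hi => h.simplexHeight_le i (by omega)) _
    have hvol' := ENNReal.toReal_mono (by finiteness) hvol
    rw [ENNReal.toReal_mul, ENNReal.toReal_natCast, ENNReal.toReal_ofReal (by positivity)] at hvol'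
    rw [one_div_mul_eq_div, div_le_iff₀ hK]
    calc (volume S).toReal ≤ _ := hvol'
      _ = _ := by simp only [K, Fin.val_succ, Fin.val_zero]; field_simp

/-- simplex-selection lemma. -/
theorem statement8 (c : ℝ) (hc : 0 < c) (n : ℕ) (hn : 1 ≤ n) :
    ∃ lam c' : ℝ, 0 < lam ∧ 0 < c' ∧
      ∀ (X : Type*) [MeasurableSpace X] (μ : Measure X),
        0 < μ Set.univ → μ Set.univ < ⊤ →
      ∀ S : Set (EuclideanSpace ℝ (Fin n)), MeasurableSet S →
        0 < volume S → volume S < ⊤ →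
      ∀ Ex : EuclideanSpace ℝ (Fin n) → Set X,
        (∀ x ∈ S, MeasurableSet (Ex x) ∧ ENNReal.ofReal c * μ Set.univ ≤ μ (Ex x)) →
        ∃ x : Fin (n + 1) → EuclideanSpace ℝ (Fin n),
          (∀ i, x i ∈ S) ∧
          ENNReal.ofReal c' * μ Set.univ ≤ μ (⋂ i, Ex (x i)) ∧
          lam * (volume S).toReal ≤
            |(Matrix.of fun i j : Fin n => (x i.succ - x 0) j).det| / (n.factorial : ℝ) :=
  statement8_general c hc n
end
end

section
/- Let n ≥ 1 be an integer, let d > 0, and let E ⊆ ℝⁿ be a bounded Lebesgue-measurable set with diam(E) ≤ d. For t ∈ ℝ let E_t = E ∩ ⋂_{i=1}^{n} (E + t·e_i), where e_1, …, e_n are the standard basis vectors of ℝⁿ. Then ∫_ℝ vol(E_t) dt ≤ 2·(d^{n−1} · vol(E)^{2n})^{1/(2n−1)}. -/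
/-!
By Fubini, `∫ vol(E_t) dt = ∫_E |T_x| dx` with `T_x = {t | x - t eᵢ ∈ E for all i}`. The set
`T_x` lies in each coordinate line section of `E` through `x`, so `|T_x| ≤ ℓᵢ(x)` (the length of
the section in direction `eᵢ`), and it is an isometric copy of a subset of `E`, so `|T_x| ≤ d`.
Where `|T_x|` exceeds a threshold `λ`, `d ≤ d λ^{-q} ∏ ℓᵢ(x)^{1/(n-1)}` with `q = n/(n-1)`, so the
Loomis–Whitney inequality `∫ ∏ ℓᵢ^{1/(n-1)} ≤ vol(E)^q` gives
`∫ vol(E_t) dt ≤ λ vol(E) + d λ^{-q} vol(E)^q`; the choice `λ = d^{(n-1)/(2n-1)} vol(E)^{1/(2n-1)}`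
makes both terms equal to the claimed bound. For `n = 1` simply `|T_x| ≤ vol(E)`.
-/

open MeasureTheory Set Metric Function
open scoped ENNReal

section MultiTranslate

variable {V W ι : Type*} [AddCommGroup V] [Module ℝ V] [AddCommGroup W] [Module ℝ W]

def multiTranslateInter (A : Set V) (v : ι → V) (t : ℝ) : Set V :=
  A ∩ ⋂ i, (fun x => x + t • v i) '' A

def lineSlice (A : Set V) (w x : V) : Set ℝ :=
  (fun t : ℝ => x - t • w) ⁻¹' A

theorem mem_multiTranslateInter {A : Set V} {v : ι → V} {t : ℝ} {x : V} :
    x ∈ multiTranslateInter A v t ↔ x ∈ A ∧ ∀ i, t ∈ lineSlice A (v i) x := by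
  simp [multiTranslateInter, lineSlice, image_add_right, sub_eq_add_neg]

theorem preimage_multiTranslateInter (L : W →ₗ[ℝ] V) (A : Set V) (v : ι → W) (t : ℝ) :
    L ⁻¹' multiTranslateInter A (fun i => L (v i)) t = multiTranslateInter (L ⁻¹' A) v t := by
  ext x
  simp [mem_multiTranslateInter, lineSlice]

variable [MeasurableSpace V] [MeasurableSub₂ V] [MeasurableSMul ℝ V]

theorem lintegral_measure_multiTranslateInter [Countable ι] (μ : Measure V) [SFinite μ]
    {A : Set V} (hA : MeasurableSet A) (v : ι → V) :
    ∫⁻ t, μ (multiTranslateInter A v t) = ∫⁻ x in A, volume (⋂ i, lineSlice A (v i) x) ∂μ := by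
  set M : Set (ℝ × V) := {p | p.2 ∈ A ∧ ∀ i, p.2 - p.1 • v i ∈ A}
  have hM : MeasurableSet M := by
    simp only [M, ofPred_and, ofPred_forall]
    exact (measurable_snd hA).inter <| MeasurableSet.iInter fun i =>
      (measurable_snd.sub (measurable_fst.smul_const (v i))) hA
  have hslice (x : V) : volume ((fun t => (t, x)) ⁻¹' M) =
      A.indicator (fun x => volume (⋂ i, lineSlice A (v i) x)) x := by
    by_cases hx : x ∈ A <;> simp [M, hx, lineSlice, ofPred_forall]; rfl
  calc ∫⁻ t, μ (multiTranslateInter A v t) = ∫⁻ t, μ (Prod.mk t ⁻¹' M) := by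
        congr! with t; ext x; simp [mem_multiTranslateInter, lineSlice, M]
    _ = ∫⁻ x, volume ((fun t => (t, x)) ⁻¹' M) ∂μ := by
        rw [← Measure.prod_apply hM, Measure.prod_apply_symm hM]
    _ = _ := by simp_rw [hslice]; exact lintegral_indicator hA _

end MultiTranslate

theorem volume_lineSlice_le_ediam {V : Type*} [NormedAddCommGroup V] [NormedSpace ℝ V]
    (A : Set V) {w : V} (hw : ‖w‖ = 1) (x : V) : volume (lineSlice A w x) ≤ ediam A := by
  have hiso : Isometry fun t : ℝ => x - t • w :=
    Isometry.of_dist_eq fun s t => by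
      rw [dist_sub_left, dist_eq_norm, ← sub_smul, norm_smul, hw, mul_one, ← dist_eq_norm,
        dist_comm]
  calc volume (lineSlice A w x) ≤ ediam (lineSlice A w x) := Real.volume_le_diam _
    _ ≤ 1 * ediam A := hiso.antilipschitz.ediam_preimage_le A
    _ = ediam A := one_mul _

namespace ENNReal

theorem rpow_card_mul_le_prod_rpow {ι : Type*} [Fintype ι] {T : ℝ≥0∞} {ℓ : ι → ℝ≥0∞}
    (hT : ∀ i, T ≤ ℓ i) {r : ℝ} (hr : 0 ≤ r) : T ^ (Fintype.card ι * r) ≤ ∏ i, ℓ i ^ r := by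
  calc T ^ (Fintype.card ι * r) = ∏ _i : ι, T ^ r := by
        rw [Finset.prod_const, Finset.card_univ, mul_comm, rpow_mul, rpow_natCast]
    _ ≤ ∏ i, ℓ i ^ r := Finset.prod_le_prod' fun i _ => rpow_le_rpow (hT i) hr

-- Split at the threshold `s`: below it `T ≤ s`, above it `1 ≤ s ^ (-q) * T ^ q`.
theorem le_add_mul_rpow_neg_mul {T D P s : ℝ≥0∞} {q : ℝ} (hq : 0 ≤ q) (hs₀ : s ≠ 0)
    (hs : s ≠ ∞) (hTD : T ≤ D) (hTP : T ^ q ≤ P) : T ≤ s + D * s ^ (-q) * P := by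
  rcases le_or_gt T s with hTs | hsT
  · exact le_add_right hTs
  · have hone : 1 ≤ s ^ (-q) * P :=
      calc (1 : ℝ≥0∞) = s ^ (-q) * s ^ q := by
            rw [← rpow_add _ _ hs₀ hs, neg_add_cancel, rpow_zero]
        _ ≤ s ^ (-q) * P := by gcongr; exact (rpow_le_rpow hsT.le hq).trans hTP
    calc T ≤ D * 1 := by rwa [mul_one]
      _ ≤ D * s ^ (-q) * P := by rw [mul_assoc]; gcongr
      _ ≤ s + D * s ^ (-q) * P := le_add_self

theorem rpow_mul_rpow_mul_add_eq_two_mul {D v : ℝ≥0∞} (hD₀ : D ≠ 0) (hD : D ≠ ∞) (hv₀ : v ≠ 0)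
    (hv : v ≠ ∞) {a b q : ℝ} (ha : a + a * q = 1) (hb : b + 1 + b * q = q) :
    D ^ a * v ^ b * v + D * (D ^ a * v ^ b) ^ (-q) * v ^ q = 2 * (D ^ a * v ^ (b + 1)) := by
  have hfirst : D ^ a * v ^ b * v = D ^ a * v ^ (b + 1) := by
    rw [rpow_add _ _ hv₀ hv, rpow_one, mul_assoc]
  have hsecond : D * (D ^ a * v ^ b) ^ (-q) * v ^ q = D ^ a * v ^ (b + 1) := by
    rw [mul_rpow_of_ne_zero (rpow_pos (pos_iff_ne_zero.2 hD₀) hD).ne'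
        (rpow_pos (pos_iff_ne_zero.2 hv₀) hv).ne', ← rpow_mul, ← rpow_mul]
    calc D * (D ^ (a * -q) * v ^ (b * -q)) * v ^ q
        = D ^ (1 + a * -q) * v ^ (b * -q + q) := by
          rw [rpow_add _ _ hD₀ hD, rpow_add _ _ hv₀ hv, rpow_one]; ring
      _ = D ^ a * v ^ (b + 1) := by
          rw [show 1 + a * -q = a by linarith, show b * -q + q = b + 1 by linarith]
  rw [hfirst, hsecond, two_mul]

end ENNReal

section Coordinate

variable {ι : Type*} [DecidableEq ι]

theorem volume_lineSlice_single {A : Set (ι → ℝ)} (hA : MeasurableSet A) (x : ι → ℝ) (i : ι) :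
    volume (lineSlice A (Pi.single i 1) x) = volume (update x i ⁻¹' A) := by
  have hline : lineSlice A (Pi.single i 1) x = (fun t => x i - t) ⁻¹' (update x i ⁻¹' A) := by
    ext t
    simp only [lineSlice, mem_preimage]
    congr!
    ext j
    rcases eq_or_ne j i with rfl | hj <;> simp [*]
  rw [hline]
  exact (Measure.measurePreserving_sub_left volume (x i)).measure_preimage
    (measurable_update x hA).nullMeasurableSet

variable [Fintype ι]

theorem lintegral_prod_volume_lineSlice_rpow_le {A : Set (ι → ℝ)} (hA : MeasurableSet A)
    (hι : 1 < Fintype.card ι) :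
    ∫⁻ x, ∏ i, volume (lineSlice A (Pi.single i 1) x) ^ (1 / (Fintype.card ι - 1 : ℝ)) ≤
      volume A ^ ((Fintype.card ι : ℝ) / (Fintype.card ι - 1)) := by
  have hp := Real.HolderConjugate.conjExponent (p := Fintype.card ι) (by exact_mod_cast hι)
  have h := lintegral_prod_lintegral_pow_le (fun _ : ι => volume) hp (measurable_one.indicator hA)
  have hslice (x : ι → ℝ) (i : ι) :
      ∫⁻ s, A.indicator 1 (update x i s) = volume (lineSlice A (Pi.single i 1) x) :=
    (lintegral_indicator_one (measurable_update x hA)).trans (volume_lineSlice_single hA x i).symm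
  simpa only [hslice, ← volume_pi, lintegral_indicator_one hA, Real.conjExponent] using h

theorem volume_lineSlice_single_of_unique [Unique ι] {A : Set (ι → ℝ)} (hA : MeasurableSet A)
    (x : ι → ℝ) (i : ι) : volume (lineSlice A (Pi.single i 1) x) = volume A := by
  have hupd : update x i = (MeasurableEquiv.funUnique ι ℝ).symm := by
    ext s j; simp [Unique.eq_default j, Unique.eq_default i]
  rw [volume_lineSlice_single hA, hupd]
  convert (volume_preserving_funUnique ι ℝ).symm.measure_preimage hA.nullMeasurableSet

theorem volume_iInter_lineSlice_single_le_ediam [Nonempty ι] (A : Set (ι → ℝ)) (x : ι → ℝ) :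
    volume (⋂ i, lineSlice A (Pi.single i 1) x) ≤ ediam A :=
  (measure_mono (iInter_subset _ (Classical.arbitrary ι))).trans <|
    volume_lineSlice_le_ediam A (by simp [Pi.norm_single]) x

variable {A : Set (ι → ℝ)} {D : ℝ≥0∞}

theorem setLIntegral_volume_iInter_lineSlice_le (hA : MeasurableSet A) (hι : 1 < Fintype.card ι)
    (hdiam : ediam A ≤ D) (hD : D ≠ ∞) {s : ℝ≥0∞} (hs₀ : s ≠ 0) (hs : s ≠ ∞) :
    ∫⁻ x in A, volume (⋂ i, lineSlice A (Pi.single i 1) x) ≤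
      s * volume A + D * s ^ (-((Fintype.card ι : ℝ) / (Fintype.card ι - 1))) *
        volume A ^ ((Fintype.card ι : ℝ) / (Fintype.card ι - 1)) := by
  have : Nonempty ι := Fintype.card_pos_iff.1 (by omega)
  set r : ℝ := 1 / (Fintype.card ι - 1)
  set q : ℝ := Fintype.card ι / (Fintype.card ι - 1)
  have hr : 0 ≤ r := div_nonneg zero_le_one (by norm_num; exact_mod_cast hι.le)
  have hqr : q = Fintype.card ι * r := (mul_one_div _ _).symm
  set P : (ι → ℝ) → ℝ≥0∞ := fun x => ∏ i, volume (lineSlice A (Pi.single i 1) x) ^ r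
  have hpoint (x : ι → ℝ) :
      volume (⋂ i, lineSlice A (Pi.single i 1) x) ≤ s + D * s ^ (-q) * P x := by
    refine ENNReal.le_add_mul_rpow_neg_mul (hqr ▸ by positivity) hs₀ hs
      ((volume_iInter_lineSlice_single_le_ediam A x).trans hdiam) ?_
    rw [hqr]
    exact ENNReal.rpow_card_mul_le_prod_rpow (fun i => measure_mono (iInter_subset _ i)) hr
  have hconst : D * s ^ (-q) ≠ ∞ :=
    ENNReal.mul_ne_top hD (ENNReal.rpow_ne_top_of_ne_zero hs₀ hs)
  calc ∫⁻ x in A, volume (⋂ i, lineSlice A (Pi.single i 1) x)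
      ≤ ∫⁻ x in A, (s + D * s ^ (-q) * P x) := lintegral_mono hpoint
    _ = s * volume A + D * s ^ (-q) * ∫⁻ x in A, P x := by
        rw [lintegral_add_left measurable_const, setLIntegral_const,
          lintegral_const_mul' _ _ hconst]
    _ ≤ s * volume A + D * s ^ (-q) * ∫⁻ x, P x := by gcongr; exact Measure.restrict_le_self
    _ ≤ s * volume A + D * s ^ (-q) * volume A ^ q := by
        gcongr; exact lintegral_prod_volume_lineSlice_rpow_le hA hι

theorem setLIntegral_volume_iInter_lineSlice_le_sq [Unique ι] (hA : MeasurableSet A) :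
    ∫⁻ x in A, volume (⋂ i, lineSlice A (Pi.single i 1) x) ≤ volume A ^ 2 :=
  calc ∫⁻ x in A, volume (⋂ i, lineSlice A (Pi.single i 1) x) ≤ ∫⁻ _ in A, volume A :=
        lintegral_mono fun x =>
          (measure_mono (iInter_subset _ default)).trans_eq
            (volume_lineSlice_single_of_unique hA x _)
    _ = volume A ^ 2 := by rw [setLIntegral_const, sq]

theorem lintegral_volume_multiTranslateInter_single_le [Nonempty ι] (hA : MeasurableSet A)
    (hAfin : volume A ≠ ∞) (hD₀ : D ≠ 0) (hD : D ≠ ∞) (hdiam : ediam A ≤ D) :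
    ∫⁻ t, volume (multiTranslateInter A (fun i => Pi.single i 1) t) ≤
      2 * (D ^ (Fintype.card ι - 1) * volume A ^ (2 * Fintype.card ι)) ^
        (1 / (2 * (Fintype.card ι : ℝ) - 1)) := by
  rw [lintegral_measure_multiTranslateInter volume hA]
  obtain hι | hι := (Nat.one_le_iff_ne_zero.2 (Fintype.card_ne_zero (α := ι))).eq_or_lt
  · have : Unique ι := (Fintype.card_eq_one_iff_nonempty_unique.1 hι.symm).some
    calc _ ≤ volume A ^ 2 := setLIntegral_volume_iInter_lineSlice_le_sq hA
      _ ≤ 2 * volume A ^ 2 := le_mul_of_one_le_left' one_le_two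
      _ = _ := by norm_num [← hι]
  obtain hA₀ | hA₀ := eq_or_ne (volume A) 0
  · simp [Measure.restrict_eq_zero.2 hA₀]
  have hn : (2 : ℝ) ≤ Fintype.card ι := by exact_mod_cast hι
  have hn₁ : (Fintype.card ι : ℝ) - 1 ≠ 0 := by linarith
  have hn₂ : 2 * (Fintype.card ι : ℝ) - 1 ≠ 0 := by linarith
  set a : ℝ := (Fintype.card ι - 1) / (2 * Fintype.card ι - 1) with ha
  set b : ℝ := 1 / (2 * Fintype.card ι - 1) with hb
  have hsplit : (D ^ (Fintype.card ι - 1) * volume A ^ (2 * Fintype.card ι)) ^ b =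
      D ^ a * volume A ^ (b + 1) := by
    rw [ENNReal.mul_rpow_of_nonneg _ _ (div_nonneg zero_le_one (by linarith)),
      ← ENNReal.rpow_natCast, ← ENNReal.rpow_natCast, ← ENNReal.rpow_mul, ← ENNReal.rpow_mul]
    congr 2
    · push_cast [hι.le]; ring
    · rw [hb]; push_cast; field_simp; ring
  have hs₀ : D ^ a * volume A ^ b ≠ 0 :=
    mul_ne_zero (ENNReal.rpow_pos (pos_iff_ne_zero.2 hD₀) hD).ne'
      (ENNReal.rpow_pos (pos_iff_ne_zero.2 hA₀) hAfin).ne'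
  have hs : D ^ a * volume A ^ b ≠ ∞ :=
    ENNReal.mul_ne_top (ENNReal.rpow_ne_top_of_ne_zero hD₀ hD)
      (ENNReal.rpow_ne_top_of_ne_zero hA₀ hAfin)
  calc _ ≤ _ := setLIntegral_volume_iInter_lineSlice_le hA hι hdiam hD hs₀ hs
    _ = _ := by
      rw [ENNReal.rpow_mul_rpow_mul_add_eq_two_mul hD₀ hD hA₀ hAfin
        (by rw [ha]; field_simp; rw [div_eq_one_iff_eq (by linarith)]; ring)
        (by rw [hb]; field_simp; ring), hsplit]

end Coordinate

/-- integral bound for self-intersections of multi-translates. -/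
theorem statement9 (n : ℕ) (hn : 1 ≤ n) (d : ℝ) (hd : 0 < d)
    (E : Set (EuclideanSpace ℝ (Fin n))) (hE : MeasurableSet E)
    (hbd : Bornology.IsBounded E) (hdiam : Metric.diam E ≤ d) :
    (∫⁻ t : ℝ,
        volume (E ∩ ⋂ i : Fin n,
          (fun x => x + t • EuclideanSpace.single i (1 : ℝ)) '' E)) ≤
      ENNReal.ofReal
        (2 * (d ^ (n - 1) * (volume E).toReal ^ (2 * n)) ^ ((1 : ℝ) / (2 * (n : ℝ) - 1))) := by
  have : Nonempty (Fin n) := Fin.pos_iff_nonempty.1 hn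
  have hn' : (1 : ℝ) ≤ n := by exact_mod_cast hn
  have htoLp := (EuclideanSpace.volume_preserving_symm_measurableEquiv_toLp (Fin n)).symm
  set A : Set (Fin n → ℝ) := WithLp.toLp 2 ⁻¹' E
  have hvol : volume A = volume E := htoLp.measure_preimage_equiv E
  have hslices (t : ℝ) : volume (multiTranslateInter E (fun i => EuclideanSpace.single i 1) t) =
      volume (multiTranslateInter A (fun i => Pi.single i 1) t) := by
    rw [← htoLp.measure_preimage_equiv]
    exact congrArg volume <| preimage_multiTranslateInter
      (WithLp.linearEquiv 2 ℝ (Fin n → ℝ)).symm.toLinearMap E (fun i => Pi.single i 1) t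
  have hdiamA : ediam A ≤ ENNReal.ofReal d :=
    calc ediam A ≤ 1 * ediam E := (PiLp.antilipschitzWith_toLp 2 _).ediam_preimage_le E
      _ ≤ ENNReal.ofReal d := by
        rw [one_mul]
        exact ediam_le_of_forall_dist_le fun x hx y hy =>
          (dist_le_diam_of_mem hbd hx hy).trans hdiam
  have hfin : volume A ≠ ∞ := hvol ▸ hbd.measure_lt_top.ne
  calc _ = ∫⁻ t, volume (multiTranslateInter A (fun i => Pi.single i 1) t) :=
        lintegral_congr hslices
    _ ≤ _ := lintegral_volume_multiTranslateInter_single_le (hE.preimage (by fun_prop)) hfin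
        (ENNReal.ofReal_pos.2 hd).ne' ENNReal.ofReal_ne_top hdiamA
    _ = _ := by
      rw [Fintype.card_fin, hvol, ENNReal.ofReal_mul zero_le_two, ENNReal.ofReal_ofNat,
        ← ENNReal.ofReal_rpow_of_nonneg (by positivity) (div_nonneg zero_le_one (by linarith)),
        ENNReal.ofReal_mul (by positivity), ENNReal.ofReal_pow hd.le,
        ENNReal.ofReal_pow ENNReal.toReal_nonneg, ENNReal.ofReal_toReal hbd.measure_lt_top.ne]
end

section
/- Let n ≥ 2 be an integer and let A ⊆ ℝ be a Lebesgue-measurable set with λ¹(A) < ∞. Then ∫_A ∫_A |t₁ − t₂|^{n−1} dt₁ dt₂ ≥ (2 / (n(n+1))) · λ¹(A)^{n+1}. -/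
/-!
Put `m = λ(A)` and `F t = λ(A ∩ (-∞, t])`. Since `F t - F s = λ(A ∩ (s, t]) ≤ t - s`, the
function `F` is 1-Lipschitz, hence continuous, and a continuous distribution function pushes its
measure `λ|_A` forward to the uniform measure `λ|_(0, m]`. Therefore
`∫_A ∫_A |t₁ - t₂|^(n-1) ≥ ∫_A ∫_A |F t₁ - F t₂|^(n-1) = ∫_0^m ∫_0^m |u - v|^(n-1)`,
which is `2 m^(n+1) / (n(n+1))`: among sets of measure `m`, an interval minimises the integral.
-/

open MeasureTheory Filter Set Topology
open scoped ENNReal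

lemma Monotone.exists_preimage_Iic_eq_Iic {f : ℝ → ℝ} (hf : Monotone f) (hc : Continuous f)
    {x a b : ℝ} (ha : f a ≤ x) (hb : x < f b) : ∃ c, f c = x ∧ f ⁻¹' Iic x = Iic c := by
  set S := f ⁻¹' Iic x
  have hbdd : BddAbove S := ⟨b, fun t ht => (hf.reflect_lt (lt_of_le_of_lt ht hb)).le⟩
  have haS : a ∈ S := ha
  have hcS : sSup S ∈ S := (isClosed_Iic.preimage hc).csSup_mem ⟨a, haS⟩ hbdd
  obtain ⟨s, -, hs⟩ : x ∈ f '' Icc a b :=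
    intermediate_value_Icc (hf.reflect_lt (lt_of_le_of_lt ha hb)).le hc.continuousOn ⟨ha, hb.le⟩
  refine ⟨sSup S, le_antisymm hcS ?_, ?_⟩
  · exact hs ▸ hf (le_csSup hbdd (show s ∈ S from hs.le))
  · exact Subset.antisymm (fun t ht => le_csSup hbdd ht) fun t ht => le_trans (hf ht) hcS

lemma volume_restrict_Ioc_Iic (m x : ℝ) :
    volume.restrict (Ioc 0 m) (Iic x) = ENNReal.ofReal (min x m) := by
  rw [Measure.restrict_apply measurableSet_Iic, inter_comm, Ioc_inter_Iic, Real.volume_Ioc,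
    sub_zero, min_comm]

noncomputable def cumDistrib (μ : Measure ℝ) (t : ℝ) : ℝ := (μ (Iic t)).toReal

section CumDistrib

variable {μ : Measure ℝ} [IsFiniteMeasure μ]

lemma monotone_cumDistrib : Monotone (cumDistrib μ) := fun _ _ hst =>
  ENNReal.toReal_mono (measure_ne_top μ _) (measure_mono (Iic_subset_Iic.2 hst))

lemma cumDistrib_sub_cumDistrib {s t : ℝ} (hst : s ≤ t) :
    cumDistrib μ t - cumDistrib μ s = (μ (Ioc s t)).toReal := by
  rw [cumDistrib, cumDistrib, ← Iic_sdiff_Iic, measure_sdiff (Iic_subset_Iic.2 hst)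
    nullMeasurableSet_Iic (measure_ne_top μ _), ENNReal.toReal_sub_of_le
    (measure_mono (Iic_subset_Iic.2 hst)) (measure_ne_top μ _)]

lemma lipschitzWith_cumDistrib (hμ : μ ≤ volume) : LipschitzWith 1 (cumDistrib μ) := by
  refine LipschitzWith.of_le_add fun s t => ?_
  rcases le_total s t with hst | hts
  · linarith [monotone_cumDistrib (μ := μ) hst, dist_nonneg (x := s) (y := t)]
  · have hIoc : (μ (Ioc t s)).toReal ≤ s - t := by
      calc (μ (Ioc t s)).toReal ≤ (volume (Ioc t s)).toReal :=
            ENNReal.toReal_mono measure_Ioc_lt_top.ne (hμ _)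
        _ = s - t := by rw [Real.volume_Ioc, ENNReal.toReal_ofReal (sub_nonneg.2 hts)]
    rw [Real.dist_eq, abs_of_nonneg (sub_nonneg.2 hts)]
    linarith [cumDistrib_sub_cumDistrib (μ := μ) hts]

lemma tendsto_cumDistrib_atBot : Tendsto (cumDistrib μ) atBot (𝓝 0) := by
  have h := tendsto_measure_iInter_atBot (μ := μ) (fun _ => nullMeasurableSet_Iic)
    monotone_Iic ⟨0, measure_ne_top μ _⟩
  rw [iInter_Iic_eq_empty_iff.2 (by simp), measure_empty] at h
  exact (ENNReal.tendsto_toReal ENNReal.zero_ne_top).comp h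

lemma tendsto_cumDistrib_atTop : Tendsto (cumDistrib μ) atTop (𝓝 (μ univ).toReal) :=
  (ENNReal.tendsto_toReal (measure_ne_top μ _)).comp (tendsto_measure_Iic_atTop μ)

lemma map_cumDistrib (hc : Continuous (cumDistrib μ)) :
    μ.map (cumDistrib μ) = volume.restrict (Ioc 0 (μ univ).toReal) := by
  have hmeas : Measurable (cumDistrib μ) := hc.measurable
  refine Measure.ext_of_Iic _ _ fun x => ?_
  rw [Measure.map_apply hmeas measurableSet_Iic, volume_restrict_Ioc_Iic]
  by_cases hlow : ∃ a, cumDistrib μ a ≤ x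
  · obtain ⟨a, ha⟩ := hlow
    rcases lt_or_ge x (μ univ).toReal with hxm | hxm
    · obtain ⟨b, hb⟩ := (tendsto_cumDistrib_atTop.eventually (eventually_gt_nhds hxm)).exists
      obtain ⟨c, hcx, hpre⟩ := monotone_cumDistrib.exists_preimage_Iic_eq_Iic hc ha hb
      rw [hpre, min_eq_left hxm.le, ← hcx, cumDistrib, ENNReal.ofReal_toReal (measure_ne_top μ _)]
    · have hpre : cumDistrib μ ⁻¹' Iic x = univ := eq_univ_of_forall fun t =>
        le_trans (ENNReal.toReal_mono (measure_ne_top μ _) (measure_mono (subset_univ _))) hxm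
      rw [hpre, min_eq_right hxm, ENNReal.ofReal_toReal (measure_ne_top μ _)]
  · push Not at hlow
    have hx : x ≤ 0 := not_lt.1 fun hx =>
      let ⟨a, ha⟩ := (tendsto_cumDistrib_atBot.eventually (eventually_lt_nhds hx)).exists
      (hlow a).not_ge ha.le
    have hpre : cumDistrib μ ⁻¹' Iic x = ∅ :=
      eq_empty_of_forall_notMem fun t ht => (hlow t).not_ge ht
    rw [hpre, measure_empty, ENNReal.ofReal_eq_zero.2 ((min_le_left _ _).trans hx)]

lemma lintegral_lintegral_comp_cumDistrib (hc : Continuous (cumDistrib μ)) {g : ℝ → ℝ → ℝ≥0∞}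
    (hg : Measurable (Function.uncurry g)) :
    ∫⁻ s, ∫⁻ t, g (cumDistrib μ s) (cumDistrib μ t) ∂μ ∂μ =
      ∫⁻ u in Ioc 0 (μ univ).toReal, ∫⁻ v in Ioc 0 (μ univ).toReal, g u v := by
  have hmeas : Measurable (cumDistrib μ) := hc.measurable
  rw [← map_cumDistrib hc, lintegral_map hg.lintegral_prod_right hmeas]
  exact lintegral_congr fun s => (lintegral_map hg.of_uncurry_left hmeas).symm

end CumDistrib

lemma integral_abs_sub_pow {a b u : ℝ} (hu : u ∈ Icc a b) (k : ℕ) :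
    ∫ v in a..b, |u - v| ^ k = ((u - a) ^ (k + 1) + (b - u) ^ (k + 1)) / (k + 1) := by
  have hcont : Continuous fun v : ℝ => |u - v| ^ k := by fun_prop
  rw [← intervalIntegral.integral_add_adjacent_intervals (hcont.intervalIntegrable a u)
    (hcont.intervalIntegrable u b)]
  have hleft : ∫ v in a..u, |u - v| ^ k = ∫ v in a..u, (u - v) ^ k :=
    intervalIntegral.integral_congr fun v hv => by
      rw [uIcc_of_le hu.1] at hv
      rw [abs_of_nonneg (sub_nonneg.2 hv.2)]
  have hright : ∫ v in u..b, |u - v| ^ k = ∫ v in u..b, (v - u) ^ k :=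
    intervalIntegral.integral_congr fun v hv => by
      rw [uIcc_of_le hu.2] at hv
      rw [abs_sub_comm, abs_of_nonneg (sub_nonneg.2 hv.1)]
  rw [hleft, hright, intervalIntegral.integral_comp_sub_left (fun x => x ^ k),
    intervalIntegral.integral_comp_sub_right (fun x => x ^ k), integral_pow, integral_pow]
  simp only [sub_self, sub_zero, zero_pow k.succ_ne_zero]
  ring

lemma integral_pow_add_sub_pow (m : ℝ) (k : ℕ) :
    ∫ u in (0 : ℝ)..m, (u ^ (k + 1) + (m - u) ^ (k + 1)) / (k + 1) =
      2 * m ^ (k + 2) / ((k + 1) * (k + 2)) := by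
  rw [intervalIntegral.integral_div,
    intervalIntegral.integral_add (Continuous.intervalIntegrable (by fun_prop) _ _)
    (Continuous.intervalIntegrable (by fun_prop) _ _),
    intervalIntegral.integral_comp_sub_left (fun x => x ^ (k + 1))]
  simp only [sub_self, sub_zero, integral_pow, zero_pow (k + 1).succ_ne_zero]
  push_cast
  field_simp
  ring

lemma lintegral_Ioc_lintegral_Ioc_abs_sub_pow {m : ℝ} (hm : 0 ≤ m) (k : ℕ) :
    ∫⁻ u in Ioc 0 m, ∫⁻ v in Ioc 0 m, ENNReal.ofReal (|u - v| ^ k) =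
      ENNReal.ofReal (2 * m ^ (k + 2) / ((k + 1) * (k + 2))) := by
  have hinner : ∀ u ∈ Ioc 0 m, ∫⁻ v in Ioc 0 m, ENNReal.ofReal (|u - v| ^ k) =
      ENNReal.ofReal ((u ^ (k + 1) + (m - u) ^ (k + 1)) / (k + 1)) := fun u hu => by
    have h := integral_abs_sub_pow (Ioc_subset_Icc_self hu) k
    rw [sub_zero] at h
    rw [← h, intervalIntegral.integral_of_le hm,
      ofReal_integral_eq_lintegral_ofReal (Continuous.integrableOn_Ioc (by fun_prop))
        (ae_of_all _ fun v => by positivity)]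
  rw [setLIntegral_congr_fun measurableSet_Ioc hinner, ← integral_pow_add_sub_pow,
    intervalIntegral.integral_of_le hm, ofReal_integral_eq_lintegral_ofReal
      (Continuous.integrableOn_Ioc (by fun_prop)) ?_]
  filter_upwards [ae_restrict_mem measurableSet_Ioc] with u hu
  have := hu.1.le
  have := sub_nonneg.2 hu.2
  positivity

theorem statement19_general (n : ℕ) (A : Set ℝ)
    (hfin : volume A < ⊤) :
    ENNReal.ofReal (2 / ((n : ℝ) * ((n : ℝ) + 1)) * (volume A).toReal ^ (n + 1)) ≤
      ∫⁻ t₁ in A, ∫⁻ t₂ in A, ENNReal.ofReal (|t₁ - t₂| ^ (n - 1)) := by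
  rcases n with _ | k
  · simp -- the constant is `2 / 0 = 0`
  have : IsFiniteMeasure (volume.restrict A) := isFiniteMeasure_restrict.2 hfin.ne
  set F := cumDistrib (volume.restrict A)
  have hF : LipschitzWith 1 F := lipschitzWith_cumDistrib Measure.restrict_le_self
  have hg : Measurable (Function.uncurry fun u v : ℝ => ENNReal.ofReal (|u - v| ^ k)) := by
    fun_prop
  rw [Nat.add_sub_cancel]
  calc ENNReal.ofReal (2 / ((k + 1 : ℕ) * ((k + 1 : ℕ) + 1)) * (volume A).toReal ^ (k + 1 + 1))
      = ∫⁻ t₁ in A, ∫⁻ t₂ in A, ENNReal.ofReal (|F t₁ - F t₂| ^ k) := by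
        rw [lintegral_lintegral_comp_cumDistrib hF.continuous hg, Measure.restrict_apply_univ,
          lintegral_Ioc_lintegral_Ioc_abs_sub_pow ENNReal.toReal_nonneg]
        congr 1
        push_cast
        ring
    _ ≤ ∫⁻ t₁ in A, ∫⁻ t₂ in A, ENNReal.ofReal (|t₁ - t₂| ^ k) :=
        lintegral_mono fun t₁ => lintegral_mono fun t₂ => ENNReal.ofReal_le_ofReal <|
          pow_le_pow_left₀ (abs_nonneg _) (by simpa [Real.dist_eq] using hF.dist_le_mul t₁ t₂) k

/-- lower bound for the Riesz-type double integral over a set of finite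
one-dimensional measure. -/
theorem statement19 (n : ℕ) (hn : 2 ≤ n) (A : Set ℝ) (hA : MeasurableSet A)
    (hfin : volume A < ⊤) :
    ENNReal.ofReal (2 / ((n : ℝ) * ((n : ℝ) + 1)) * (volume A).toReal ^ (n + 1)) ≤
      ∫⁻ t₁ in A, ∫⁻ t₂ in A, ENNReal.ofReal (|t₁ - t₂| ^ (n - 1)) :=
  statement19_general n A hfin
end
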